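/- arXiv:2306.00116 — 6 statements merged into one kernel-verified Lean document; each statement's English description precedes it below -/
import Mathlib

section
/- Let (y_n) be a strictly decreasing sequence of positive reals converging to 0 with strictly decreasing gaps, and let Y = {y_n : n ∈ N}. For small δ > 0 let n_δ be the critical index at which gaps first drop below 2δ. Then the Lebesgue measure of the δ-neighborhood Y_δ of Y in R equals y_{n_δ} + 2δ·n_δ. -/
open Filter MeasureTheory

/-- For `Y = {y_n : n ≥ 1}` with `(y_n)` strictly decreasing to `0` with strictly
decreasing gaps, and `n_δ` the critical index at which gaps first drop below `2δ`,
the Lebesgue measure of the open `δ`-neighborhood of `Y` equals `y_{n_δ} + 2δ·n_δ`. -/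
theorem measure_thickening_of_sequence (y : ℕ → ℝ)
    (hpos : ∀ n, 1 ≤ n → 0 < y n)
    (hanti : ∀ n, 1 ≤ n → y (n + 1) < y n)
    (hlim : Tendsto y atTop (nhds 0))
    (hgaps : ∀ n, 1 ≤ n → y (n + 1) - y (n + 2) < y n - y (n + 1)) :
    ∃ δ₀ > 0, ∀ δ : ℝ, 0 < δ → δ < δ₀ → ∀ n : ℕ, 1 ≤ n →
      (y n - y (n + 1) < 2 * δ ∧ ∀ m, 1 ≤ m → m < n → 2 * δ ≤ y m - y (m + 1)) →
      volume (Metric.thickening δ {x : ℝ | ∃ k : ℕ, 1 ≤ k ∧ x = y k}) =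
        ENNReal.ofReal (y n + 2 * δ * n) := by
  refine ⟨1, one_pos, fun δ hδ _ n hn ⟨hgap, hbefore⟩ => ?_⟩
  -- monotonicity of y on [1, ∞)
  have hmono : ∀ k, 1 ≤ k → ∀ j, k ≤ j → y j ≤ y k := by
    intro k hk j hkj
    induction j, hkj using Nat.le_induction with
    | base => exact le_rfl
    | succ j hj ih => exact le_trans (hanti j (hk.trans hj)).le ih
  -- gaps antitone
  have hgapmono : ∀ k, 1 ≤ k → ∀ j, k ≤ j → y j - y (j + 1) ≤ y k - y (k + 1) := by
    intro k hk j hkj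
    induction j, hkj using Nat.le_induction with
    | base => exact le_rfl
    | succ j hj ih => exact le_trans (hgaps j (hk.trans hj)).le ih
  have hgapsmall : ∀ k, n ≤ k → y k - y (k + 1) < 2 * δ := fun k hk =>
    lt_of_le_of_lt (hgapmono n hn k hk) hgap
  -- the nucleus fills up
  have hnuc : ∀ x ∈ Set.Ioo (-δ) (y n + δ), ∃ k, n ≤ k ∧ x ∈ Set.Ioo (y k - δ) (y k + δ) := by
    rintro x ⟨hx1, hx2⟩
    have hxpos : (0 : ℝ) < x + δ := by linarith
    have hev : ∀ᶠ k in atTop, y k < x + δ := hlim.eventually (eventually_lt_nhds hxpos)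
    obtain ⟨K, hK⟩ := hev.exists_forall_of_atTop
    classical
    have hP : ∃ k, n ≤ k ∧ y k < x + δ := ⟨max n K, le_max_left _ _, hK _ (le_max_right _ _)⟩
    set k := Nat.find hP with hkdef
    obtain ⟨hkn, hky⟩ := Nat.find_spec hP
    refine ⟨k, hkn, by linarith, ?_⟩
    rcases eq_or_lt_of_le hkn with h | h
    · show x < y (Nat.find hP) + δ
      rw [← h]; exact hx2
    · have hk1 : n ≤ k - 1 := by omega
      have hknot : ¬ (n ≤ k - 1 ∧ y (k - 1) < x + δ) := Nat.find_min hP (by omega)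
      have hyk1 : x + δ ≤ y (k - 1) := by
        by_contra hc; push_neg at hc; exact hknot ⟨hk1, hc⟩
      have hg := hgapsmall (k - 1) hk1
      have hkk : k - 1 + 1 = k := by omega
      rw [hkk] at hg
      linarith
  -- set identity
  have hset : Metric.thickening δ {x : ℝ | ∃ k : ℕ, 1 ≤ k ∧ x = y k} =
      Set.Ioo (-δ) (y n + δ) ∪ ⋃ k ∈ Finset.Ico 1 n, Set.Ioo (y k - δ) (y k + δ) := by
    ext x
    simp only [Metric.mem_thickening_iff, Set.mem_setOf_eq, Set.mem_union, Set.mem_iUnion,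
      Finset.mem_Ico, Set.mem_Ioo, exists_prop]
    constructor
    · rintro ⟨z, ⟨k, hk1, rfl⟩, hd⟩
      rw [Real.dist_eq, abs_lt] at hd
      rcases lt_or_ge k n with h | h
      · exact Or.inr ⟨k, ⟨hk1, h⟩, by linarith, by linarith⟩
      · have h1 : y k ≤ y n := hmono n hn k h
        have h2 : 0 < y k := hpos k hk1
        exact Or.inl ⟨by linarith, by linarith⟩
    · rintro (hx | ⟨k, ⟨hk1, hkn⟩, h1, h2⟩)
      · obtain ⟨k, hkn, h1, h2⟩ := hnuc x hx
        exact ⟨y k, ⟨k, hn.trans hkn, rfl⟩, by rw [Real.dist_eq, abs_lt]; constructor <;> linarith⟩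
      · exact ⟨y k, ⟨k, hk1, rfl⟩, by rw [Real.dist_eq, abs_lt]; constructor <;> linarith⟩
  rw [hset]
  -- separation: a < b, a < n  ⇒  y b + δ ≤ y a - δ
  have hsep : ∀ a b, 1 ≤ a → a < n → a < b → y b + δ ≤ y a - δ := by
    intro a b ha han hab
    have h1 : 2 * δ ≤ y a - y (a + 1) := hbefore a ha han
    have h2 : y b ≤ y (a + 1) := hmono (a + 1) (by omega) b (by omega)
    linarith
  -- disjointness of the nucleus from the tail
  have hdisj : Disjoint (Set.Ioo (-δ) (y n + δ))
      (⋃ k ∈ Finset.Ico 1 n, Set.Ioo (y k - δ) (y k + δ)) := by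
    rw [Set.disjoint_left]
    rintro x ⟨_, hx2⟩ hx
    simp only [Set.mem_iUnion, Finset.mem_Ico, Set.mem_Ioo, exists_prop] at hx
    obtain ⟨k, ⟨hk1, hkn⟩, h1, _⟩ := hx
    have := hsep k n hk1 hkn hkn
    linarith
  -- pairwise disjointness of the tail
  have hpw : (↑(Finset.Ico 1 n) : Set ℕ).PairwiseDisjoint
      (fun k => Set.Ioo (y k - δ) (y k + δ)) := by
    intro a ha b hb hab
    simp only [Finset.coe_Ico, Set.mem_Ico] at ha hb
    have key : ∀ a b, 1 ≤ a → a < n → a < b →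
        Disjoint (Set.Ioo (y a - δ) (y a + δ)) (Set.Ioo (y b - δ) (y b + δ)) := by
      intro a b ha han hab
      rw [Set.disjoint_left]
      rintro x ⟨h1, _⟩ ⟨_, h4⟩
      have := hsep a b ha han hab
      linarith
    rcases hab.lt_or_gt with h | h
    · exact key a b ha.1 ha.2 h
    · exact (key b a hb.1 hb.2 h).symm
  -- measurability
  have hmeasU : MeasurableSet (⋃ k ∈ Finset.Ico 1 n, Set.Ioo (y k - δ) (y k + δ)) :=
    (Finset.Ico 1 n).measurableSet_biUnion (fun k _ => measurableSet_Ioo)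
  rw [measure_union hdisj hmeasU,
    measure_biUnion_finset hpw (fun k _ => measurableSet_Ioo)]
  have htail : ∀ k ∈ Finset.Ico 1 n,
      volume (Set.Ioo (y k - δ) (y k + δ)) = ENNReal.ofReal (2 * δ) := by
    intro k _
    rw [Real.volume_Ioo]
    congr 1
    ring
  rw [Finset.sum_congr rfl htail, Finset.sum_const, Nat.card_Ico, Real.volume_Ioo]
  have h2δ : (0 : ℝ) ≤ 2 * δ := by linarith
  rw [nsmul_eq_mul, ← ENNReal.ofReal_natCast (n - 1), ← ENNReal.ofReal_mul (by positivity),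
    ← ENNReal.ofReal_add (by linarith [(hpos n hn)]) (by positivity)]
  congr 1
  have hcast : ((n - 1 : ℕ) : ℝ) = (n : ℝ) - 1 := by
    rw [Nat.cast_sub hn, Nat.cast_one]
  rw [hcast]
  ring
end

section
/- Fix m ≥ 2 an integer and α > 0. Then the function F(y) = ∫_y^1 exp((t^{1−m} − y^{1−m})/(α(m−1))) dt satisfies F(y) = o(y) as y → 0+. -/
/-!
Write `r = 1 - m < 0` and `β = α (m - 1)`. Since `t ↦ t ^ r` decreases, the integrand is at most `1`
on `[y, (1 + δ) y]`, and on `[(1 + δ) y, 1]` it is at most `exp (-c y ^ r)` with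
`c = (1 - (1 + δ) ^ r) / β > 0`. Hence `F y / y ≤ δ + exp (-c y ^ r) / y`. With `u = y ^ r → ∞`
the last term is `u ^ (-1 / r) * exp (-c u) → 0`, and letting `δ → 0` gives `F y = o(y)`.
-/

open Real Filter Set Topology

section

variable {r β y : ℝ}

lemma tendsto_exp_mul_rpow_div_nhdsGT_zero {c : ℝ} (hr : r < 0) (hc : c < 0) :
    Tendsto (fun y => exp (c * y ^ r) / y) (𝓝[>] 0) (𝓝 0) := by
  have h := (tendsto_rpow_mul_exp_neg_mul_atTop_nhds_zero (-r⁻¹) (-c) (neg_pos.2 hc)).comp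
    (tendsto_rpow_neg_nhdsGT_zero hr)
  refine h.congr' (eventually_nhdsWithin_of_forall fun y (hy : 0 < y) => ?_)
  have hexp : (y ^ r) ^ (-r⁻¹) = y⁻¹ := by
    rw [← rpow_mul hy.le, mul_neg, mul_inv_cancel₀ hr.ne, rpow_neg_one]
  simp [hexp, div_eq_inv_mul]

lemma exp_rpow_sub_div_le {s t : ℝ} (hr : r ≤ 0) (hβ : 0 ≤ β) (hy : 0 < y) (hs : 0 < s)
    (hst : s * y ≤ t) : exp ((t ^ r - y ^ r) / β) ≤ exp ((s ^ r - 1) / β * y ^ r) := by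
  have ht : t ^ r ≤ s ^ r * y ^ r := by
    rw [← mul_rpow hs.le hy.le]
    exact rpow_le_rpow_of_nonpos (mul_pos hs hy) hst hr
  rw [exp_le_exp, div_mul_eq_mul_div, sub_one_mul]
  exact div_le_div_of_nonneg_right (by linarith) hβ

lemma exp_rpow_sub_div_le_one {t : ℝ} (hr : r ≤ 0) (hβ : 0 ≤ β) (hy : 0 < y) (hyt : y ≤ t) :
    exp ((t ^ r - y ^ r) / β) ≤ 1 := by
  simpa using exp_rpow_sub_div_le hr hβ hy one_pos (s := 1) (by simpa using hyt)

lemma integral_exp_rpow_sub_div_le {δ : ℝ} (hr : r ≤ 0) (hβ : 0 ≤ β) (hy : 0 < y) (hδ : 0 ≤ δ)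
    (hδy : (1 + δ) * y ≤ 1) :
    ∫ t in y..1, exp ((t ^ r - y ^ r) / β) ≤ δ * y + exp (((1 + δ) ^ r - 1) / β * y ^ r) := by
  set f := fun t => exp ((t ^ r - y ^ r) / β)
  have hcont : ContinuousOn f (Ioi 0) := fun t (ht : 0 < t) =>
    (((continuousAt_rpow_const t r (.inl ht.ne')).sub continuousAt_const).div_const β
      |>.rexp).continuousWithinAt
  have hint {a b : ℝ} (ha : 0 < a) (hab : a ≤ b) : IntervalIntegrable f MeasureTheory.volume a b :=
    (hcont.mono fun t ht => ha.trans_le (uIcc_of_le hab ▸ ht).1).intervalIntegrable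
  have hsy : y ≤ (1 + δ) * y := by nlinarith
  have hnear : ∫ t in y..(1 + δ) * y, f t ≤ δ * y := by
    refine (Real.le_norm_self _).trans ((intervalIntegral.norm_integral_le_of_norm_le_const
      (C := 1) fun t ht => ?_).trans_eq ?_)
    · rw [uIoc_of_le hsy] at ht
      rw [Real.norm_of_nonneg (exp_pos _).le]
      exact exp_rpow_sub_div_le_one hr hβ hy ht.1.le
    · rw [abs_of_nonneg (by linarith)]; ring
  have hfar : ∫ t in (1 + δ) * y..1, f t ≤ exp (((1 + δ) ^ r - 1) / β * y ^ r) := by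
    refine (Real.le_norm_self _).trans ((intervalIntegral.norm_integral_le_of_norm_le_const
      (C := exp (((1 + δ) ^ r - 1) / β * y ^ r)) fun t ht => ?_).trans ?_)
    · rw [uIoc_of_le hδy] at ht
      rw [Real.norm_of_nonneg (exp_pos _).le]
      exact exp_rpow_sub_div_le hr hβ hy (by linarith) ht.1.le
    · rw [abs_of_nonneg (by linarith)]
      exact mul_le_of_le_one_right (exp_pos _).le (by nlinarith)
  rw [← intervalIntegral.integral_add_adjacent_intervals (hint hy hsy)
    (hint (hy.trans_le hsy) hδy)]
  exact add_le_add hnear hfar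

lemma div_le_add_exp_mul_rpow_div {δ : ℝ} (hr : r ≤ 0) (hβ : 0 ≤ β) (hy : 0 < y) (hδ : 0 ≤ δ)
    (hδy : (1 + δ) * y ≤ 1) :
    (∫ t in y..1, exp ((t ^ r - y ^ r) / β)) / y ≤
      δ + exp (((1 + δ) ^ r - 1) / β * y ^ r) / y := by
  rw [div_le_iff₀ hy, add_mul, div_mul_cancel₀ _ hy.ne']
  exact integral_exp_rpow_sub_div_le hr hβ hy hδ hδy

theorem tendsto_integral_exp_rpow_sub_div_div_nhdsGT_zero (hr : r < 0) (hβ : 0 < β) :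
    Tendsto (fun y => (∫ t in y..1, exp ((t ^ r - y ^ r) / β)) / y) (𝓝[>] 0) (𝓝 0) := by
  refine tendsto_order.2 ⟨fun a ha => ?_, fun ε hε => ?_⟩
  · filter_upwards [Ioo_mem_nhdsGT one_pos] with y hy
    exact ha.trans_le (div_nonneg (intervalIntegral.integral_nonneg hy.2.le
      fun t _ => (exp_pos _).le) hy.1.le)
  · have hδ : 0 < ε / 2 := half_pos hε
    have hc : ((1 + ε / 2) ^ r - 1) / β < 0 := div_neg_of_neg_of_pos
      (by linarith [rpow_lt_one_of_one_lt_of_neg (x := 1 + ε / 2) (by linarith) hr]) hβ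
    filter_upwards [(tendsto_exp_mul_rpow_div_nhdsGT_zero hr hc).eventually (gt_mem_nhds hδ),
      Ioo_mem_nhdsGT (one_div_pos.2 (by linarith : 0 < 1 + ε / 2))] with y hdecay hy
    have hδy : (1 + ε / 2) * y ≤ 1 := (le_div_iff₀' (by linarith)).1 hy.2.le
    linarith [div_le_add_exp_mul_rpow_div hr.le hβ.le hy.1 hδ.le hδy]

end

/-- For integer `m ≥ 2` and `α > 0`, the function
`F(y) = ∫_y^1 exp((t^{1-m} - y^{1-m})/(α(m-1))) dt` satisfies `F(y) = o(y)` as `y → 0+`. -/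
theorem semi_hyperbolic_integral_little_o (m : ℕ) (hm : 2 ≤ m) (α : ℝ) (hα : 0 < α) :
    Tendsto
      (fun y : ℝ =>
        (∫ t in y..1, Real.exp ((t ^ (1 - (m : ℝ)) - y ^ (1 - (m : ℝ))) / (α * ((m : ℝ) - 1)))) / y)
      (nhdsWithin 0 (Set.Ioi 0)) (nhds 0) := by
  have hm' : (2 : ℝ) ≤ m := by exact_mod_cast hm
  exact tendsto_integral_exp_rpow_sub_div_div_nhdsGT_zero (by linarith) (mul_pos hα (by linarith))
end

section
/- Let Y = {y_n} ⊂ (0,1) where (y_n) is strictly decreasing to 0 with strictly decreasing gaps, and suppose Y has Minkowski dimension d ∈ [0,1). Let Γ be a family of curves in R^2, where Γ_n is the graph over y ∈ [y_n, 1] of x(y) = (y_n/y)^{1/α} for a fixed α ∈ (0,1). Then the Minkowski dimension of the union ⋃_n Γ_n exists and equals 1 + d. -/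
open Filter MeasureTheory Set Metric Asymptotics Topology Real
open scoped ENNReal

/-!
Along the trajectories `x ^ α * y` is constant, so `F (x, t) = x ^ α * t` maps `Γ_n` to `y n` and
the vertical section of `Γ` at `x` is `x ^ (-α) • Y` cut at height `1`. Near that line `F` is
Lipschitz with constant `≈ x ^ (α - 1)`, so the section of `Γ_δ` at `x` lies in `x ^ (-α)` times
the `≈ x ^ (α - 1) δ`-neighbourhood of `Y`, and, for `x` bounded away from `0`, contains
`x ^ (-α)` times a `cδ`-neighbourhood of `Y`. Integrating over `x` in a fixed interval gives
`|Y_{cδ}| ≲ |Γ_δ|`. If `|Y_r| ≲ r ^ u` with `u < 1`, integrating over `x ≥ 2 δ ^ u` gives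
`|Γ_δ| ≲ δ ^ u ∫₀² x ^ ((α - 1) u - α) dx`, a convergent integral, while the strip
`x < 2 δ ^ u` has area `O(δ ^ u)`. Hence `|Γ_δ|` has the same exponent `1 - d` in `δ` as `|Y_δ|`.
-/

section LogbExponent

variable {V : ℝ → ℝ} {s : ℝ}

lemma tendsto_rpow_nhdsGT_zero {w : ℝ} (hw : 0 < w) :
    Tendsto (fun δ : ℝ => δ ^ w) (𝓝[>] 0) (𝓝 0) := by
  simpa [zero_rpow hw.ne'] using
    ((continuousAt_id (x := (0 : ℝ)).rpow_const (Or.inr hw.le)).tendsto).mono_left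
      nhdsWithin_le_nhds

lemma isLittleO_rpow_rpow_nhdsGT_zero {u v : ℝ} (h : v < u) :
    (fun δ : ℝ => δ ^ u) =o[𝓝[>] 0] fun δ => δ ^ v := by
  refine isLittleO_of_tendsto' ?_ ((tendsto_rpow_nhdsGT_zero (sub_pos.2 h)).congr' ?_)
  · filter_upwards [self_mem_nhdsWithin] with δ hδ hδv
    exact absurd hδv (rpow_pos_of_pos hδ v).ne'
  · filter_upwards [self_mem_nhdsWithin] with δ hδ
    rw [rpow_sub hδ]

lemma isBigO_rpow_of_tendsto_logb (hV : Tendsto (fun δ => logb δ (V δ)) (𝓝[>] 0) (𝓝 s))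
    {u : ℝ} (hu : u < s) : V =O[𝓝[>] 0] fun δ => δ ^ u := by
  refine IsBigO.of_bound' ?_
  filter_upwards [hV.eventually (lt_mem_nhds hu), Ioo_mem_nhdsGT one_pos] with δ hlt hδ
  rw [norm_of_nonneg (rpow_pos_of_pos hδ.1 u).le, norm_eq_abs]
  rcases eq_or_ne (V δ) 0 with hv | hv
  · simpa [hv] using (rpow_pos_of_pos hδ.1 u).le
  rw [← logb_abs, lt_logb_iff_rpow_lt_of_base_lt_one hδ.1 hδ.2 (abs_pos.2 hv)] at hlt
  exact hlt.le

lemma rpow_isBigO_of_tendsto_logb (hV : Tendsto (fun δ => logb δ (V δ)) (𝓝[>] 0) (𝓝 s))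
    (hV0 : ∀ᶠ δ in 𝓝[>] 0, V δ ≠ 0) {u : ℝ} (hu : s < u) :
    (fun δ => δ ^ u) =O[𝓝[>] 0] V := by
  refine IsBigO.of_bound' ?_
  filter_upwards [hV.eventually (gt_mem_nhds hu), hV0, Ioo_mem_nhdsGT one_pos] with δ hlt hv hδ
  rw [← logb_abs, logb_lt_iff_lt_rpow_of_base_lt_one hδ.1 hδ.2 (abs_pos.2 hv)] at hlt
  rw [norm_of_nonneg (rpow_pos_of_pos hδ.1 u).le, norm_eq_abs]
  exact hlt.le

lemma tendsto_logb_of_isBigO (hup : ∀ᶠ u in 𝓝[<] s, V =O[𝓝[>] 0] fun δ => δ ^ u)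
    (hlo : ∀ᶠ u in 𝓝[>] s, (fun δ => δ ^ u) =O[𝓝[>] 0] V) :
    Tendsto (fun δ => logb δ (V δ)) (𝓝[>] 0) (𝓝 s) := by
  have hV0 : ∀ᶠ δ in 𝓝[>] 0, V δ ≠ 0 := by
    obtain ⟨u, hu⟩ := hlo.exists
    filter_upwards [hu.eq_zero_imp, self_mem_nhdsWithin] with δ h hδ hV
    exact (rpow_pos_of_pos hδ u).ne' (h hV)
  refine tendsto_order.2 ⟨fun a ha => ?_, fun a ha => ?_⟩
  · obtain ⟨u, hu, hau, -⟩ := (hup.and (Ioo_mem_nhdsLT ha)).exists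
    obtain ⟨w, haw, hwu⟩ := exists_between hau
    filter_upwards [(hu.trans_isLittleO (isLittleO_rpow_rpow_nhdsGT_zero hwu)).def one_pos,
      hV0, Ioo_mem_nhdsGT one_pos] with δ hle hv hδ
    rw [one_mul, norm_of_nonneg (rpow_pos_of_pos hδ.1 w).le, norm_eq_abs] at hle
    rw [← logb_abs]
    exact haw.trans_le ((le_logb_iff_rpow_le_of_base_lt_one hδ.1 hδ.2 (abs_pos.2 hv)).2 hle)
  · obtain ⟨u, hu, -, hua⟩ := (hlo.and (Ioo_mem_nhdsGT ha)).exists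
    obtain ⟨w, huw, hwa⟩ := exists_between hua
    filter_upwards [((isLittleO_rpow_rpow_nhdsGT_zero huw).trans_isBigO hu).def one_pos,
      hV0, Ioo_mem_nhdsGT one_pos] with δ hle hv hδ
    rw [one_mul, norm_of_nonneg (rpow_pos_of_pos hδ.1 w).le, norm_eq_abs] at hle
    rw [← logb_abs]
    exact ((logb_le_iff_le_rpow_of_base_lt_one hδ.1 hδ.2 (abs_pos.2 hv)).2 hle).trans_lt hwa

end LogbExponent

theorem MeasureTheory.Measure.prod_inter_prod_univ_eq_setLIntegral {β γ : Type*} [MeasurableSpace β]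
    [MeasurableSpace γ] (μ : Measure β) (ν : Measure γ) [SFinite μ] [SFinite ν] {T : Set (β × γ)}
    (hT : MeasurableSet T) (I : Set β) :
    μ.prod ν (T ∩ I ×ˢ univ) = ∫⁻ x in I, ν (Prod.mk x ⁻¹' T) ∂μ := by
  rw [← Measure.restrict_apply hT, ← Measure.restrict_prod_eq_prod_univ, Measure.prod_apply hT]

lemma toReal_measure_thickening_ne_zero {E : Type*} [PseudoMetricSpace E] [ProperSpace E]
    [MeasurableSpace E] (μ : Measure E) [μ.IsOpenPosMeasure] [IsFiniteMeasureOnCompacts μ]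
    {S : Set E} (hS : Bornology.IsBounded S) (hne : S.Nonempty) {δ : ℝ} (hδ : 0 < δ) :
    (μ (thickening δ S)).toReal ≠ 0 :=
  (ENNReal.toReal_pos (isOpen_thickening.measure_pos μ (hne.mono (self_subset_thickening hδ S))).ne'
    hS.thickening.measure_lt_top.ne).ne'

lemma exists_measure_thickening_le_of_isBigO {E : Type*} [PseudoMetricSpace E] [ProperSpace E]
    [MeasurableSpace E] (μ : Measure E) [IsFiniteMeasureOnCompacts μ] {S : Set E}
    (hS : Bornology.IsBounded S) {u : ℝ}
    (h : (fun r => (μ (thickening r S)).toReal) =O[𝓝[>] 0] fun r => r ^ u) :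
    ∃ C > 0, ∃ r₀ > 0, ∀ r ∈ Ioo 0 r₀, μ (thickening r S) ≤ ENNReal.ofReal (C * r ^ u) := by
  obtain ⟨C, hC0, hC⟩ := h.exists_pos
  obtain ⟨r₀, hr₀, hr₀C⟩ := mem_nhdsGT_iff_exists_Ioo_subset.1 hC.bound
  refine ⟨C, hC0, r₀, hr₀, fun r hr => ?_⟩
  have h := hr₀C hr
  simp only [mem_ofPred_eq, norm_of_nonneg ENNReal.toReal_nonneg,
    norm_of_nonneg (rpow_pos_of_pos hr.1 u).le] at h
  exact (ENNReal.le_ofReal_iff_toReal_le hS.thickening.measure_lt_top.ne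
    (ENNReal.toReal_nonneg.trans h)).2 h

section RpowEstimates

variable {α m : ℝ}

lemma rpow_sub_rpow_le_of_le (hα1 : α ≤ 1) (hm : 0 < m) {a b : ℝ} (ha : m ≤ a) (hab : a ≤ b) :
    b ^ α - a ^ α ≤ m ^ (α - 1) * (b - a) := by
  have ha0 : 0 < a := hm.trans_le ha
  have hpow : a ^ (α - 1) * a = a ^ α := by rw [rpow_sub_one ha0.ne', div_mul_cancel₀ _ ha0.ne']
  -- concavity of `t ↦ t ^ α` in the crude form `(b / a) ^ α ≤ b / a`
  have hratio : (b / a) ^ α ≤ b / a := by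
    simpa using rpow_le_rpow_of_exponent_le ((one_le_div ha0).2 hab) hα1
  have hb : b ^ α ≤ a ^ (α - 1) * b := by
    rw [div_rpow (ha0.trans_le hab).le ha0.le, div_le_iff₀ (rpow_pos_of_pos ha0 α)] at hratio
    calc b ^ α ≤ b / a * a ^ α := hratio
      _ = a ^ (α - 1) * b := by rw [← hpow]; field_simp
  calc b ^ α - a ^ α ≤ a ^ (α - 1) * (b - a) := by rw [mul_sub, hpow]; linarith
    _ ≤ m ^ (α - 1) * (b - a) :=
        mul_le_mul_of_nonneg_right (rpow_le_rpow_of_nonpos hm ha (by linarith)) (by linarith)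

lemma abs_rpow_sub_rpow_le (hα0 : 0 ≤ α) (hα1 : α ≤ 1) (hm : 0 < m) {a b : ℝ} (ha : m ≤ a)
    (hb : m ≤ b) : |a ^ α - b ^ α| ≤ m ^ (α - 1) * |a - b| := by
  rcases le_total a b with hab | hba
  · rw [abs_sub_comm, abs_of_nonneg (sub_nonneg.2 (rpow_le_rpow (hm.le.trans ha) hab hα0)),
      abs_sub_comm, abs_of_nonneg (sub_nonneg.2 hab)]
    exact rpow_sub_rpow_le_of_le hα1 hm ha hab
  · rw [abs_of_nonneg (sub_nonneg.2 (rpow_le_rpow (hm.le.trans hb) hba hα0)),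
      abs_of_nonneg (sub_nonneg.2 hba)]
    exact rpow_sub_rpow_le_of_le hα1 hm hb hba

lemma abs_rpow_mul_sub_rpow_mul_lt (hα0 : 0 ≤ α) (hα1 : α ≤ 1) (hm : 0 < m) {δ a b s t : ℝ}
    (ha : m ≤ a) (hb : m ≤ b) (hb1 : b ≤ 1) (hab : |a - b| < δ) (hs : |s| ≤ 2)
    (hst : |s - t| < δ) : |a ^ α * s - b ^ α * t| < 3 * m ^ (α - 1) * δ := by
  have hb0 : 0 < b := hm.trans_le hb
  have hmα : 0 < m ^ (α - 1) := rpow_pos_of_pos hm _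
  have hbα : b ^ α ≤ m ^ (α - 1) :=
    calc b ^ α = b ^ (α - 1) * b := by rw [rpow_sub_one hb0.ne', div_mul_cancel₀ _ hb0.ne']
      _ ≤ b ^ (α - 1) * 1 := by gcongr
      _ ≤ m ^ (α - 1) := by rw [mul_one]; exact rpow_le_rpow_of_nonpos hm hb (by linarith)
  have h₁ : |(a ^ α - b ^ α) * s| ≤ 2 * m ^ (α - 1) * δ :=
    calc |(a ^ α - b ^ α) * s| ≤ m ^ (α - 1) * δ * 2 := by
          rw [abs_mul]
          refine mul_le_mul ((abs_rpow_sub_rpow_le hα0 hα1 hm ha hb).trans ?_) hs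
            (abs_nonneg s) (mul_pos hmα ((abs_nonneg _).trans_lt hab)).le
          gcongr
      _ = 2 * m ^ (α - 1) * δ := by ring
  have h₂ : |b ^ α * (s - t)| < m ^ (α - 1) * δ := by
    rw [abs_mul, abs_of_pos (rpow_pos_of_pos hb0 α)]
    calc b ^ α * |s - t| ≤ m ^ (α - 1) * |s - t| := by gcongr
      _ < m ^ (α - 1) * δ := by gcongr
  calc |a ^ α * s - b ^ α * t| = |(a ^ α - b ^ α) * s + b ^ α * (s - t)| := by ring_nf
    _ ≤ |(a ^ α - b ^ α) * s| + |b ^ α * (s - t)| := abs_add_le _ _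
    _ < 3 * m ^ (α - 1) * δ := by linarith

end RpowEstimates

def saddleCurves (y : ℕ → ℝ) (α : ℝ) : Set (ℝ × ℝ) :=
  ⋃ n : ℕ, {p : ℝ × ℝ | p.2 ∈ Icc (y n) 1 ∧ p.1 = (y n / p.2) ^ (1 / α)}

section SaddleCurves

variable {y : ℕ → ℝ} {α : ℝ}

lemma saddleCurves_subset_Ioc_prod_Ioc (hα : 0 < α) (hpos : ∀ n, 0 < y n) :
    saddleCurves y α ⊆ Ioc 0 1 ×ˢ Ioc 0 1 := by
  rintro p ⟨-, ⟨n, rfl⟩, ⟨hyp, hp1⟩, hp⟩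
  have hp2 : 0 < p.2 := (hpos n).trans_le hyp
  have hq : 0 < y n / p.2 := div_pos (hpos n) hp2
  refine ⟨?_, hp2, hp1⟩
  rw [mem_Ioc, hp]
  exact ⟨rpow_pos_of_pos hq _, rpow_le_one hq.le ((div_le_one hp2).2 hyp) (by positivity)⟩

lemma rpow_mul_mem_range_of_mem_saddleCurves (hα : α ≠ 0) (hpos : ∀ n, 0 < y n)
    {p : ℝ × ℝ} (hp : p ∈ saddleCurves y α) : p.1 ^ α * p.2 ∈ range y := by
  obtain ⟨-, ⟨n, rfl⟩, ⟨hyp, -⟩, hp⟩ := hp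
  have hp2 : 0 < p.2 := (hpos n).trans_le hyp
  refine ⟨n, ?_⟩
  rw [hp, one_div, rpow_inv_rpow (div_pos (hpos n) hp2).le hα, div_mul_cancel₀ _ hp2.ne']

lemma mk_div_rpow_mem_saddleCurves (hα : 0 < α) (hpos : ∀ n, 0 < y n) {x : ℝ} (hx0 : 0 < x)
    (hx1 : x ≤ 1) {n : ℕ} (hn : y n ≤ x ^ α) : (x, y n / x ^ α) ∈ saddleCurves y α := by
  have hxα : 0 < x ^ α := rpow_pos_of_pos hx0 α
  refine mem_iUnion.2 ⟨n, ⟨?_, (div_le_one hxα).2 hn⟩, ?_⟩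
  · exact (le_div_iff₀ hxα).2 (mul_le_of_le_one_right (hpos n).le (rpow_le_one hx0.le hx1 hα.le))
  · show x = (y n / (y n / x ^ α)) ^ (1 / α)
    rw [div_div_cancel₀ (hpos n).ne', one_div, rpow_rpow_inv hx0.le hα.ne']

lemma isBounded_saddleCurves (hα : 0 < α) (hpos : ∀ n, 0 < y n) :
    Bornology.IsBounded (saddleCurves y α) :=
  (isBounded_Ioc 0 1 |>.prod (isBounded_Ioc 0 1)).subset (saddleCurves_subset_Ioc_prod_Ioc hα hpos)

end SaddleCurves

section Thickening

variable {y : ℕ → ℝ} {α : ℝ}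

lemma rpow_mul_mem_thickening_of_mem_thickening_saddleCurves (hα : 0 < α) (hα1 : α ≤ 1)
    (hpos : ∀ n, 0 < y n) {δ : ℝ} (hδ1 : δ ≤ 1) {p : ℝ × ℝ}
    (hp : p ∈ thickening δ (saddleCurves y α)) (hpδ : 2 * δ ≤ p.1) :
    p.1 ^ α * p.2 ∈ thickening (6 * p.1 ^ (α - 1) * δ) (range y) := by
  obtain ⟨q, hq, hpq⟩ := mem_thickening_iff.1 hp
  obtain ⟨⟨-, hq1⟩, hq20, hq21⟩ := saddleCurves_subset_Ioc_prod_Ioc hα hpos hq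
  rw [Prod.dist_eq, max_lt_iff, dist_eq, dist_eq] at hpq
  have hδ : 0 < δ := (abs_nonneg _).trans_lt hpq.1
  have hp1 : 0 < p.1 := by linarith
  have hm : p.1 / 2 ≤ q.1 := by linarith [(abs_lt.1 hpq.1).2]
  have hs : |p.2| ≤ 2 := abs_le.2 ⟨by linarith [(abs_lt.1 hpq.2).1], by
    linarith [(abs_lt.1 hpq.2).2]⟩
  have hhalf : (p.1 / 2) ^ (α - 1) ≤ 2 * p.1 ^ (α - 1) := by
    have h2 : (2 : ℝ) ^ (-1 : ℝ) ≤ 2 ^ (α - 1) :=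
      rpow_le_rpow_of_exponent_le one_le_two (by linarith)
    rw [rpow_neg_one] at h2
    rw [div_rpow hp1.le zero_le_two, div_le_iff₀ (by linarith)]
    nlinarith [rpow_pos_of_pos hp1 (α - 1)]
  refine mem_thickening_iff.2 ⟨_, rpow_mul_mem_range_of_mem_saddleCurves hα.ne' hpos hq, ?_⟩
  rw [dist_eq]
  calc |p.1 ^ α * p.2 - q.1 ^ α * q.2| < 3 * (p.1 / 2) ^ (α - 1) * δ :=
        abs_rpow_mul_sub_rpow_mul_lt hα.le hα1 (half_pos hp1) (half_le_self hp1.le) hm hq1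
          hpq.1 hs hpq.2
    _ ≤ 6 * p.1 ^ (α - 1) * δ := by nlinarith

lemma mk_mem_thickening_saddleCurves (hα : 0 < α) (hpos : ∀ n, 0 < y n) {a x t δ : ℝ}
    (ha : 0 < a) (hax : a ≤ x) (hx1 : x ≤ 1) (hy : ∀ n, y n ≤ a ^ α)
    (ht : x ^ α * t ∈ thickening (a ^ α * δ) (range y)) :
    (x, t) ∈ thickening δ (saddleCurves y α) := by
  obtain ⟨_, ⟨n, rfl⟩, hdist⟩ := mem_thickening_iff.1 ht
  have hx0 : 0 < x := ha.trans_le hax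
  have hxα : 0 < x ^ α := rpow_pos_of_pos hx0 α
  have haxα : a ^ α ≤ x ^ α := rpow_le_rpow ha.le hax hα.le
  have hδ : 0 < δ := pos_of_mul_pos_right (dist_nonneg.trans_lt hdist) (rpow_pos_of_pos ha α).le
  refine mem_thickening_iff.2
    ⟨_, mk_div_rpow_mem_saddleCurves hα hpos hx0 hx1 ((hy n).trans haxα), ?_⟩
  rw [Prod.dist_eq, dist_self, dist_eq]
  refine max_lt hδ ?_
  rw [dist_eq] at hdist
  have hsub : t - y n / x ^ α = (x ^ α * t - y n) / x ^ α := by field_simp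
  rw [hsub, abs_div, abs_of_pos hxα, div_lt_iff₀ hxα]
  nlinarith

lemma ofReal_mul_volume_thickening_le_volume_thickening_saddleCurves (hα : 0 < α)
    (hpos : ∀ n, 0 < y n) {a : ℝ} (ha : 0 < a) (hy : ∀ n, y n ≤ a ^ α) (δ : ℝ) :
    ENNReal.ofReal (1 - a) * volume (thickening (a ^ α * δ) (range y)) ≤
      volume (thickening δ (saddleCurves y α)) := by
  set W := volume (thickening (a ^ α * δ) (range y))
  have hsec : ∀ x ∈ Icc a 1, W ≤ volume (Prod.mk x ⁻¹' thickening δ (saddleCurves y α)) := by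
    intro x hx
    have hx0 : 0 < x := ha.trans_le hx.1
    have hxα : 0 < x ^ α := rpow_pos_of_pos hx0 α
    calc W ≤ ENNReal.ofReal |(x ^ α)⁻¹| * W := by
          refine le_mul_of_one_le_left zero_le (ENNReal.one_le_ofReal.2 ?_)
          rw [abs_of_pos (inv_pos.2 hxα)]
          exact one_le_inv₀ hxα |>.2 (rpow_le_one hx0.le hx.2 hα.le)
      _ = volume ((x ^ α * ·) ⁻¹' thickening (a ^ α * δ) (range y)) :=
          (volume_preimage_mul_left hxα.ne' _).symm
      _ ≤ _ := measure_mono fun t ht => mk_mem_thickening_saddleCurves hα hpos ha hx.1 hx.2 hy ht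
  calc ENNReal.ofReal (1 - a) * W = ∫⁻ _ in Icc a 1, W := by
        rw [setLIntegral_const, volume_Icc, mul_comm]
    _ ≤ ∫⁻ x in Icc a 1, volume (Prod.mk x ⁻¹' thickening δ (saddleCurves y α)) :=
        setLIntegral_mono' measurableSet_Icc hsec
    _ = volume (thickening δ (saddleCurves y α) ∩ Icc a 1 ×ˢ univ) := by
        rw [Measure.volume_eq_prod,
          Measure.prod_inter_prod_univ_eq_setLIntegral _ _ isOpen_thickening.measurableSet]
    _ ≤ _ := measure_mono inter_subset_left

lemma volume_thickening_saddleCurves_le (hα : 0 < α) (hα1 : α ≤ 1) (hpos : ∀ n, 0 < y n)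
    {δ a : ℝ} (hδ : 0 < δ) (hδ1 : δ ≤ 1) (ha : 2 * δ ≤ a) :
    volume (thickening δ (saddleCurves y α)) ≤ ENNReal.ofReal (3 * (a + δ)) +
      ∫⁻ x in Icc a 2, ENNReal.ofReal (x ^ α)⁻¹ *
        volume (thickening (6 * x ^ (α - 1) * δ) (range y)) := by
  set T := thickening δ (saddleCurves y α)
  have hcover : T ⊆ Ioo (-δ) a ×ˢ Ioo (-1) 2 ∪ T ∩ Icc a 2 ×ˢ univ := by
    intro p hp
    obtain ⟨q, hq, hpq⟩ := mem_thickening_iff.1 hp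
    obtain ⟨⟨hq10, hq11⟩, hq20, hq21⟩ := saddleCurves_subset_Ioc_prod_Ioc hα hpos hq
    rw [Prod.dist_eq, max_lt_iff, dist_eq, dist_eq, abs_lt, abs_lt] at hpq
    by_cases h : p.1 < a
    · exact Or.inl ⟨⟨by linarith, h⟩, by linarith, by linarith⟩
    · exact Or.inr ⟨hp, ⟨not_lt.1 h, by linarith⟩, trivial⟩
  have hsec : ∀ x ∈ Icc a 2, volume (Prod.mk x ⁻¹' T) ≤
      ENNReal.ofReal (x ^ α)⁻¹ * volume (thickening (6 * x ^ (α - 1) * δ) (range y)) := by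
    intro x hx
    have hxα : 0 < x ^ α := rpow_pos_of_pos (by linarith [hx.1]) α
    rw [← abs_of_pos (inv_pos.2 hxα), ← volume_preimage_mul_left hxα.ne']
    exact measure_mono fun t ht => rpow_mul_mem_thickening_of_mem_thickening_saddleCurves
      hα hα1 hpos hδ1 ht (by linarith [hx.1])
  calc volume T ≤ volume (Ioo (-δ) a ×ˢ Ioo (-1 : ℝ) 2) + volume (T ∩ Icc a 2 ×ˢ univ) :=
        (measure_mono hcover).trans (measure_union_le _ _)
    _ ≤ _ := by
      gcongr
      · rw [Measure.volume_eq_prod, Measure.prod_prod, volume_Ioo, volume_Ioo,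
          ← ENNReal.ofReal_mul (by linarith)]
        exact le_of_eq (congrArg _ (by ring))
      · rw [Measure.volume_eq_prod,
          Measure.prod_inter_prod_univ_eq_setLIntegral _ _ isOpen_thickening.measurableSet]
        exact setLIntegral_mono' measurableSet_Icc hsec

end Thickening

section Asymptotics

variable {y : ℕ → ℝ} {α : ℝ}

lemma volume_thickening_saddleCurves_le_rpow (hα : 0 < α) (hα1 : α ≤ 1) (hpos : ∀ n, 0 < y n)
    {u C δ : ℝ} (hu1 : u ≤ 1) (hC : 0 ≤ C) (hδ : δ ∈ Ioo 0 1)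
    (hY : ∀ x ∈ Icc (2 * δ ^ u) 2, volume (thickening (6 * x ^ (α - 1) * δ) (range y)) ≤
      ENNReal.ofReal (C * (6 * x ^ (α - 1) * δ) ^ u)) :
    volume (thickening δ (saddleCurves y α)) ≤ ENNReal.ofReal (9 * δ ^ u) +
      ENNReal.ofReal (C * 6 ^ u * δ ^ u) *
        ∫⁻ x in Ioc 0 2, ENNReal.ofReal (x ^ ((α - 1) * u - α)) := by
  have hδ0 : 0 < δ := hδ.1
  have hδu : δ ≤ δ ^ u := by simpa using rpow_le_rpow_of_exponent_ge hδ0 hδ.2.le hu1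
  have hδu0 : 0 < 2 * δ ^ u := by positivity
  refine (volume_thickening_saddleCurves_le (a := 2 * δ ^ u) hα hα1 hpos hδ0 hδ.2.le
    (by linarith)).trans
    (add_le_add (ENNReal.ofReal_le_ofReal (by linarith)) ?_)
  have hpt : ∀ x ∈ Icc (2 * δ ^ u) 2, ENNReal.ofReal (x ^ α)⁻¹ *
      volume (thickening (6 * x ^ (α - 1) * δ) (range y)) ≤
      ENNReal.ofReal (C * 6 ^ u * δ ^ u) * ENNReal.ofReal (x ^ ((α - 1) * u - α)) := by
    intro x hx
    have hx0 : 0 < x := hδu0.trans_le hx.1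
    have hxα : 0 < x ^ α := rpow_pos_of_pos hx0 α
    calc ENNReal.ofReal (x ^ α)⁻¹ * volume (thickening (6 * x ^ (α - 1) * δ) (range y))
        ≤ ENNReal.ofReal (x ^ α)⁻¹ * ENNReal.ofReal (C * (6 * x ^ (α - 1) * δ) ^ u) := by
          gcongr; exact hY x hx
      _ = ENNReal.ofReal (C * 6 ^ u * δ ^ u) * ENNReal.ofReal (x ^ ((α - 1) * u - α)) := by
          rw [← ENNReal.ofReal_mul (inv_pos.2 hxα).le, ← ENNReal.ofReal_mul (by positivity)]
          congr 1
          rw [mul_rpow (by positivity) hδ.1.le, mul_rpow (by norm_num) (rpow_nonneg hx0.le _),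
            ← rpow_mul hx0.le, rpow_sub hx0]
          field_simp
  calc ∫⁻ x in Icc (2 * δ ^ u) 2, ENNReal.ofReal (x ^ α)⁻¹ *
        volume (thickening (6 * x ^ (α - 1) * δ) (range y))
      ≤ ∫⁻ x in Icc (2 * δ ^ u) 2, ENNReal.ofReal (C * 6 ^ u * δ ^ u) *
          ENNReal.ofReal (x ^ ((α - 1) * u - α)) := setLIntegral_mono' measurableSet_Icc hpt
    _ = ENNReal.ofReal (C * 6 ^ u * δ ^ u) *
          ∫⁻ x in Icc (2 * δ ^ u) 2, ENNReal.ofReal (x ^ ((α - 1) * u - α)) :=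
        lintegral_const_mul' _ _ ENNReal.ofReal_ne_top
    _ ≤ _ := by gcongr

lemma isBigO_volume_thickening_saddleCurves (hα : 0 < α) (hα1 : α < 1) (hpos : ∀ n, 0 < y n)
    (hbdd : Bornology.IsBounded (range y)) {u : ℝ} (hu1 : u < 1)
    (hY : (fun r => (volume (thickening r (range y))).toReal) =O[𝓝[>] 0] fun r => r ^ u) :
    (fun δ => (volume (thickening δ (saddleCurves y α))).toReal) =O[𝓝[>] 0]
      fun δ => δ ^ u := by
  obtain ⟨C, hC0, r₀, hr₀, hYr⟩ := exists_measure_thickening_le_of_isBigO volume hbdd hY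
  have hαu : 0 < (1 - α) * (1 - u) := mul_pos (sub_pos.2 hα1) (sub_pos.2 hu1)
  set K := ∫⁻ x in Ioc 0 2, ENNReal.ofReal (x ^ ((α - 1) * u - α))
  have hK : K ≠ ⊤ := (intervalIntegral.intervalIntegrable_rpow' (a := 0) (b := 2)
    (by linarith : -1 < (α - 1) * u - α)).1.lintegral_lt_top.ne
  -- the radius `6 * x ^ (α - 1) * δ` used below is largest at `x = 2 * δ ^ u`
  have hrad : Tendsto (fun δ : ℝ => 6 * (2 * δ ^ u) ^ (α - 1) * δ) (𝓝[>] 0) (𝓝 0) := by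
    have := (tendsto_rpow_nhdsGT_zero (by linarith : 0 < u * (α - 1) + 1)).const_mul
      (6 * (2 : ℝ) ^ (α - 1))
    rw [mul_zero] at this
    refine this.congr' ?_
    filter_upwards [self_mem_nhdsWithin] with δ hδ
    rw [mul_rpow zero_le_two (rpow_pos_of_pos hδ u).le, ← rpow_mul hδ.le, rpow_add hδ, rpow_one]
    ring
  refine IsBigO.of_bound (9 + C * 6 ^ u * K.toReal) ?_
  filter_upwards [hrad.eventually (gt_mem_nhds hr₀), Ioo_mem_nhdsGT one_pos] with δ hδr hδ
  rw [norm_of_nonneg ENNReal.toReal_nonneg, norm_of_nonneg (rpow_pos_of_pos hδ.1 u).le]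
  have hδ0 : 0 < δ := hδ.1
  have hδu0 : 0 < 2 * δ ^ u := by positivity
  have hrad_le : ∀ x ∈ Icc (2 * δ ^ u) 2, 6 * x ^ (α - 1) * δ ∈ Ioo 0 r₀ := by
    intro x hx
    have hx0 : 0 < x := hδu0.trans_le hx.1
    refine ⟨by positivity, lt_of_le_of_lt ?_ hδr⟩
    have := rpow_le_rpow_of_nonpos hδu0 hx.1 (by linarith : α - 1 ≤ 0)
    gcongr
  have hbound := volume_thickening_saddleCurves_le_rpow hα hα1.le hpos hu1.le hC0.le hδ
    fun x hx => hYr _ (hrad_le x hx)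
  change _ ≤ _ + _ * K at hbound
  rw [← ENNReal.ofReal_toReal hK, ← ENNReal.ofReal_mul (by positivity),
    ← ENNReal.ofReal_add (by positivity) (by positivity)] at hbound
  refine ENNReal.toReal_le_of_le_ofReal (by positivity) (hbound.trans_eq (congrArg _ (by ring)))

lemma rpow_isBigO_volume_thickening_saddleCurves (hα : 0 < α) (hpos : ∀ n, 0 < y n)
    (hanti : Antitone y) (hy0 : y 0 < 1) {u : ℝ}
    (hY : (fun r => r ^ u) =O[𝓝[>] 0] fun r => (volume (thickening r (range y))).toReal) :
    (fun δ => δ ^ u) =O[𝓝[>] 0]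
      fun δ => (volume (thickening δ (saddleCurves y α))).toReal := by
  obtain ⟨a, ha0, ha1, haα⟩ : ∃ a, 0 < a ∧ a < 1 ∧ a ^ α = y 0 :=
    ⟨y 0 ^ (1 / α), rpow_pos_of_pos (hpos 0) _, rpow_lt_one (hpos 0).le hy0 (by positivity),
      by rw [one_div, rpow_inv_rpow (hpos 0).le hα.ne']⟩
  have hscale : (fun δ => δ ^ u) =O[𝓝[>] 0] fun δ => (y 0 * δ) ^ u := by
    refine (isBigO_self_const_mul (rpow_pos_of_pos (hpos 0) u).ne' _ _).congr' EventuallyEq.rfl ?_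
    filter_upwards [self_mem_nhdsWithin] with δ hδ
    rw [mul_rpow (hpos 0).le (le_of_lt hδ)]
  have hcomp := hY.comp_tendsto (tendsto_iff_comap.2 (comap_mulLeft_nhdsGT_zero (hpos 0)).ge)
  have hcmp : (fun δ => (volume (thickening (y 0 * δ) (range y))).toReal) =O[𝓝[>] 0]
      fun δ => (volume (thickening δ (saddleCurves y α))).toReal := by
    refine IsBigO.of_bound (1 - a)⁻¹ (Eventually.of_forall fun δ => ?_)
    rw [norm_of_nonneg ENNReal.toReal_nonneg, norm_of_nonneg ENNReal.toReal_nonneg,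
      le_inv_mul_iff₀ (sub_pos.2 ha1)]
    have h := ofReal_mul_volume_thickening_le_volume_thickening_saddleCurves hα hpos ha0
      (fun n => haα ▸ hanti (Nat.zero_le n)) δ
    rw [haα] at h
    have := ENNReal.toReal_mono (isBounded_saddleCurves hα hpos).thickening.measure_lt_top.ne h
    rwa [ENNReal.toReal_mul, ENNReal.toReal_ofReal (sub_pos.2 ha1).le] at this
  exact hscale.trans (hcomp.trans hcmp)

end Asymptotics

theorem dim_union_trajectories_linear_saddle_general (y : ℕ → ℝ) (α d : ℝ)
    (hα : 0 < α) (hα1 : α < 1)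
    (hpos : ∀ n, 0 < y n) (hlt1 : ∀ n, y n < 1)
    (hanti : StrictAnti y)
    (hd0 : 0 ≤ d)
    (hdim : Tendsto
      (fun δ : ℝ => 1 - Real.log ((volume (Metric.thickening δ (Set.range y))).toReal) / Real.log δ)
      (nhdsWithin 0 (Ioi 0)) (nhds d)) :
    Tendsto
      (fun δ : ℝ => 2 - Real.log ((volume (Metric.thickening δ
          (⋃ n : ℕ, {p : ℝ × ℝ | p.2 ∈ Icc (y n) 1 ∧ p.1 = (y n / p.2) ^ (1 / α)}))).toReal)
        / Real.log δ)
      (nhdsWithin 0 (Ioi 0)) (nhds (1 + d)) := by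
  have hbdd : Bornology.IsBounded (range y) :=
    (isBounded_Icc 0 1).subset (range_subset_iff.2 fun n => ⟨(hpos n).le, (hlt1 n).le⟩)
  have hY : Tendsto (fun δ => logb δ (volume (thickening δ (range y))).toReal) (𝓝[>] 0)
      (𝓝 (1 - d)) := by
    simpa [log_div_log] using (tendsto_const_nhds (x := (1 : ℝ))).sub hdim
  have hY0 : ∀ᶠ δ in 𝓝[>] 0, (volume (thickening δ (range y))).toReal ≠ 0 :=
    eventually_mem_nhdsWithin.mono fun δ hδ =>
      toReal_measure_thickening_ne_zero volume hbdd (range_nonempty y) hδ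
  have hΓ : Tendsto (fun δ => logb δ (volume (thickening δ (saddleCurves y α))).toReal)
      (𝓝[>] 0) (𝓝 (1 - d)) := by
    refine tendsto_logb_of_isBigO ?_ ?_
    · filter_upwards [self_mem_nhdsWithin] with u hu
      exact isBigO_volume_thickening_saddleCurves hα hα1 hpos hbdd (by linarith [mem_Iio.1 hu])
        (isBigO_rpow_of_tendsto_logb hY hu)
    · filter_upwards [self_mem_nhdsWithin] with u hu
      exact rpow_isBigO_volume_thickening_saddleCurves hα hpos hanti.antitone (hlt1 0)
        (rpow_isBigO_of_tendsto_logb hY hY0 hu)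
  have h := (tendsto_const_nhds (x := (2 : ℝ))).sub hΓ
  rw [show (2 : ℝ) - (1 - d) = 1 + d by ring] at h
  simp only [← log_div_log] at h
  exact h

/-- Minkowski dimension of the union of saddle trajectories `Γ_n` through `(1, y_n)`
for the linear saddle `ẋ = -x`, `ẏ = αy` with `0 < α < 1`: it equals `1 + dim_B {y_n}`. -/
theorem dim_union_trajectories_linear_saddle (y : ℕ → ℝ) (α d : ℝ)
    (hα : 0 < α) (hα1 : α < 1)
    (hpos : ∀ n, 0 < y n) (hlt1 : ∀ n, y n < 1)
    (hanti : StrictAnti y) (hlim : Tendsto y atTop (nhds 0))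
    (hgaps : StrictAnti fun n => y n - y (n + 1))
    (hd0 : 0 ≤ d) (hd1 : d < 1)
    (hdim : Tendsto
      (fun δ : ℝ => 1 - Real.log ((volume (Metric.thickening δ (Set.range y))).toReal) / Real.log δ)
      (nhdsWithin 0 (Ioi 0)) (nhds d)) :
    Tendsto
      (fun δ : ℝ => 2 - Real.log ((volume (Metric.thickening δ
          (⋃ n : ℕ, {p : ℝ × ℝ | p.2 ∈ Icc (y n) 1 ∧ p.1 = (y n / p.2) ^ (1 / α)}))).toReal)
        / Real.log δ)
      (nhdsWithin 0 (Ioi 0)) (nhds (1 + d)) :=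
  dim_union_trajectories_linear_saddle_general y α d hα hα1 hpos hlt1 hanti hd0 hdim
end

section
/- Let Y = {y_n} ⊂ (0,1) with (y_n) strictly decreasing to 0 with strictly decreasing gaps and Minkowski dimension d ∈ [0,1). Let Γ_n be the graph over [y_n, 1] of x(y) = y_n/y (trajectories of the linear saddle with α = 1 through (1, y_n)). Then the Minkowski dimension of ⋃_n Γ_n exists and equals 1 + d. -/
/-!
Along `Γ_n` the product `t x` equals `y_n`, so the shear `(x, t) ↦ (t x, t)` straightens the
trajectories, and for `t` away from `0` the `t`-slice of a neighbourhood of `⋃ Γ_n` is, up to the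
factor `t⁻¹`, a neighbourhood of `Y` of comparable radius. Integrating `t⁻¹` over `[y_0, 1]` gives
`|G_δ| ≥ log (1 / y_0) |Y_{y_0 δ}|`, and over `[2δ, 1 + δ]` it gives
`|G_δ| ≤ (1 - log δ) |Y_{3δ}|`, the strip `t ≤ 2δ` contributing only `O(δ) ≤ |Y_{3δ}|`.
Neither a constant rescaling of `δ` nor the factor `1 - log δ` changes the limit of
`log |·| / log δ`, so `log |G_δ| / log δ → 1 - d`.
-/

open Filter MeasureTheory Set Topology Real

theorem tendsto_log_comp_const_mul_div_log {g : ℝ → ℝ} {l a : ℝ} (ha : 0 < a)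
    (hg : Tendsto (fun δ => log (g δ) / log δ) (𝓝[>] 0) (𝓝 l)) :
    Tendsto (fun δ => log (g (a * δ)) / log δ) (𝓝[>] 0) (𝓝 l) := by
  have hscale : Tendsto (a * ·) (𝓝[>] (0 : ℝ)) (𝓝[>] 0) :=
    tendsto_iff_comap.mpr (comap_mulLeft_nhdsGT_zero ha).ge
  have hratio : Tendsto (fun δ => log (a * δ) / log δ) (𝓝[>] 0) (𝓝 1) := by
    have h := (tendsto_const_nhds (x := log a)).div_atBot tendsto_log_nhdsGT_zero
    rw [← zero_add 1]
    refine (h.add_const 1).congr' ?_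
    filter_upwards [Ioo_mem_nhdsGT one_pos, self_mem_nhdsWithin] with δ hδ hδ0
    have : log δ ≠ 0 := (log_neg hδ.1 hδ.2).ne
    rw [log_mul ha.ne' hδ.1.ne', add_div, div_self this]
  rw [← mul_one l]
  refine ((hg.comp hscale).mul hratio).congr' ?_
  filter_upwards [eventually_nhdsGT_zero_mul_left ha (Ioo_mem_nhdsGT one_pos)] with δ hδ
  exact div_mul_div_cancel₀ (log_neg hδ.1 hδ.2).ne

theorem tendsto_log_one_sub_log_div_log :
    Tendsto (fun δ => log (1 - log δ) / log δ) (𝓝[>] 0) (𝓝 0) := by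
  have h : Tendsto (fun u => log (u + 1) / u) atTop (𝓝 0) := by
    refine ((tendsto_pow_log_div_mul_add_atTop 1 (-1) 1 one_ne_zero).comp
      (tendsto_atTop_add_const_right _ 1 tendsto_id)).congr fun u => ?_
    simp
  have h' := (h.comp (tendsto_neg_atBot_atTop.comp tendsto_log_nhdsGT_zero)).neg
  rw [neg_zero] at h'
  refine h'.congr fun δ => ?_
  simp only [Function.comp_apply, div_neg, neg_neg, sub_eq_neg_add]

theorem tendsto_log_div_log_of_le_of_le {f g : ℝ → ℝ} {l a b c : ℝ} (ha : 0 < a) (hb : 0 < b)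
    (hc : 0 < c) (hg : ∀ δ, 0 < δ → 0 < g δ)
    (hlim : Tendsto (fun δ => log (g δ) / log δ) (𝓝[>] 0) (𝓝 l))
    (hlow : ∀ᶠ δ in 𝓝[>] 0, c * g (a * δ) ≤ f δ)
    (hup : ∀ᶠ δ in 𝓝[>] 0, f δ ≤ (1 - log δ) * g (b * δ)) :
    Tendsto (fun δ => log (f δ) / log δ) (𝓝[>] 0) (𝓝 l) := by
  have hbelow : Tendsto (fun δ => log (1 - log δ) / log δ + log (g (b * δ)) / log δ)
      (𝓝[>] 0) (𝓝 (0 + l)) :=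
    tendsto_log_one_sub_log_div_log.add (tendsto_log_comp_const_mul_div_log hb hlim)
  have habove : Tendsto (fun δ => log c / log δ + log (g (a * δ)) / log δ)
      (𝓝[>] 0) (𝓝 (0 + l)) :=
    (tendsto_const_nhds.div_atBot tendsto_log_nhdsGT_zero).add
      (tendsto_log_comp_const_mul_div_log ha hlim)
  rw [zero_add] at hbelow habove
  refine tendsto_of_tendsto_of_tendsto_of_le_of_le' hbelow habove ?_ ?_
  all_goals
    filter_upwards [hlow, hup, Ioo_mem_nhdsGT one_pos] with δ hδlow hδup hδ
    have hlogδ : log δ < 0 := log_neg hδ.1 hδ.2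
    have hlow_pos : 0 < c * g (a * δ) := mul_pos hc (hg _ (mul_pos ha hδ.1))
    rw [← add_div]
  · rw [← log_mul (by linarith) (hg _ (mul_pos hb hδ.1)).ne']
    exact div_le_div_of_nonpos_of_le hlogδ.le (log_le_log (hlow_pos.trans_le hδlow) hδup)
  · rw [← log_mul hc.ne' (hg _ (mul_pos ha hδ.1)).ne']
    exact div_le_div_of_nonpos_of_le hlogδ.le (log_le_log hlow_pos hδlow)

theorem lintegral_ofReal_inv_Ioc {a b : ℝ} (ha : 0 < a) (hab : a ≤ b) :
    ∫⁻ t in Ioc a b, ENNReal.ofReal t⁻¹ = ENNReal.ofReal (log (b / a)) := by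
  have hcont : ContinuousOn (fun t : ℝ => t⁻¹) (Icc a b) :=
    continuousOn_inv₀.mono fun t ht => (ha.trans_le ht.1).ne'
  rw [← ofReal_integral_eq_lintegral_ofReal (hcont.integrableOn_Icc.mono_set Ioc_subset_Icc_self),
    ← intervalIntegral.integral_of_le hab, integral_inv_of_pos ha (ha.trans_le hab)]
  filter_upwards [ae_restrict_mem measurableSet_Ioc] with t ht
  exact inv_nonneg.mpr (ha.trans ht.1).le

theorem volume_setOf_snd_mem_mul_mem {s T : Set ℝ} (hs : MeasurableSet s) (hs₀ : s ⊆ Ioi 0)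
    (hT : MeasurableSet T) :
    volume {p : ℝ × ℝ | p.2 ∈ s ∧ p.2 * p.1 ∈ T} = volume T * ∫⁻ t in s, ENNReal.ofReal t⁻¹ := by
  have hmeas : MeasurableSet {p : ℝ × ℝ | p.2 ∈ s ∧ p.2 * p.1 ∈ T} :=
    (measurable_snd hs).inter ((measurable_snd.mul measurable_fst) hT)
  have hslice : ∀ t, volume ((fun x => (x, t)) ⁻¹' {p : ℝ × ℝ | p.2 ∈ s ∧ p.2 * p.1 ∈ T}) =
      s.indicator (fun t => volume T * ENNReal.ofReal t⁻¹) t := by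
    intro t
    by_cases ht : t ∈ s
    · have ht₀ : 0 < t := hs₀ ht
      have : (fun x => (x, t)) ⁻¹' {p : ℝ × ℝ | p.2 ∈ s ∧ p.2 * p.1 ∈ T} = (t * ·) ⁻¹' T := by
        ext x; simp [ht]
      rw [this, indicator_of_mem ht, Real.volume_preimage_mul_left ht₀.ne',
        abs_of_pos (inv_pos.mpr ht₀), mul_comm]
    · simp [ht]
  rw [Measure.volume_eq_prod, Measure.prod_apply_symm hmeas]
  simp only [hslice, lintegral_indicator hs]
  exact lintegral_const_mul _ measurable_inv.ennreal_ofReal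

def saddleTrajectories (y : ℕ → ℝ) : Set (ℝ × ℝ) :=
  ⋃ n, {p : ℝ × ℝ | p.2 ∈ Icc (y n) 1 ∧ p.1 = y n / p.2}

section saddleTrajectories

variable {y : ℕ → ℝ}

theorem mk_div_mem_saddleTrajectories {n : ℕ} {t : ℝ} (ht : t ∈ Icc (y n) 1) :
    (y n / t, t) ∈ saddleTrajectories y :=
  mem_iUnion.mpr ⟨n, ht, rfl⟩

theorem exists_of_mem_saddleTrajectories (hy : ∀ n, 0 < y n) {q : ℝ × ℝ}
    (hq : q ∈ saddleTrajectories y) :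
    ∃ n, q.2 * q.1 = y n ∧ q.1 ∈ Icc 0 1 ∧ q.2 ∈ Icc (y n) 1 := by
  obtain ⟨n, hq₂, hq₁⟩ := mem_iUnion.mp hq
  have hq₂₀ : 0 < q.2 := (hy n).trans_le hq₂.1
  refine ⟨n, by rw [hq₁, mul_div_cancel₀ _ hq₂₀.ne'], ?_, hq₂⟩
  rw [hq₁]
  exact ⟨div_nonneg (hy n).le hq₂₀.le, div_le_one_of_le₀ hq₂.1 hq₂₀.le⟩

theorem isBounded_saddleTrajectories (hy : ∀ n, 0 < y n) :
    Bornology.IsBounded (saddleTrajectories y) := by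
  refine (Metric.isBounded_Icc (0 : ℝ × ℝ) 1).subset fun q hq => ?_
  obtain ⟨n, -, hq₁, hq₂⟩ := exists_of_mem_saddleTrajectories hy hq
  exact ⟨⟨hq₁.1, (hy n).le.trans hq₂.1⟩, ⟨hq₁.2, hq₂.2⟩⟩

theorem thickening_saddleTrajectories_subset (hy : ∀ n, 0 < y n) {δ : ℝ} (hδ : δ ≤ 1) :
    Metric.thickening δ (saddleTrajectories y) ⊆
      Ioo (-δ) (1 + δ) ×ˢ Ioc (-δ) (2 * δ) ∪
        {p | p.2 ∈ Ioc (2 * δ) (1 + δ) ∧ p.2 * p.1 ∈ Metric.thickening (3 * δ) (range y)} := by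
  intro p hp
  obtain ⟨q, hq, hpq⟩ := Metric.mem_thickening_iff.mp hp
  obtain ⟨n, hqy, hq₁, hq₂⟩ := exists_of_mem_saddleTrajectories hy hq
  rw [Prod.dist_eq, max_lt_iff, Real.dist_eq, Real.dist_eq] at hpq
  obtain ⟨hpq₁, hpq₂⟩ := hpq
  have hδ₀ : 0 < δ := (abs_nonneg _).trans_lt hpq₁
  have hp₂₁ : p.2 < 1 + δ := by linarith [(abs_lt.mp hpq₂).2, hq₂.2]
  rcases le_or_gt p.2 (2 * δ) with hp₂ | hp₂
  · have hpq₁' := abs_lt.mp hpq₁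
    exact Or.inl ⟨⟨by linarith [hq₁.1], by linarith [hq₁.2]⟩,
      by linarith [(abs_lt.mp hpq₂).1, hy n, hq₂.1], hp₂⟩
  refine Or.inr ⟨⟨hp₂, hp₂₁.le⟩, Metric.mem_thickening_iff.mpr ⟨y n, mem_range_self n, ?_⟩⟩
  have hp₂₀ : 0 < p.2 := by linarith
  rw [Real.dist_eq, ← hqy]
  calc |p.2 * p.1 - q.2 * q.1| = |p.2 * (p.1 - q.1) + (p.2 - q.2) * q.1| := by ring_nf
    _ ≤ p.2 * |p.1 - q.1| + |p.2 - q.2| * q.1 := by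
      grw [abs_add_le, abs_mul, abs_mul, abs_of_pos hp₂₀, abs_of_nonneg hq₁.1]
    _ < (1 + δ) * δ + δ * 1 := add_lt_add_of_lt_of_le
      (mul_lt_mul'' hp₂₁ hpq₁ hp₂₀.le (abs_nonneg _)) (mul_le_mul hpq₂.le hq₁.2 hq₁.1 hδ₀.le)
    _ ≤ 3 * δ := by nlinarith

theorem setOf_snd_mem_mul_mem_subset_thickening_saddleTrajectories (hy : ∀ n, 0 < y n)
    (hanti : Antitone y) (δ : ℝ) :
    {p : ℝ × ℝ | p.2 ∈ Ioc (y 0) 1 ∧ p.2 * p.1 ∈ Metric.thickening (y 0 * δ) (range y)} ⊆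
      Metric.thickening δ (saddleTrajectories y) := by
  rintro p ⟨hp₂, hp⟩
  obtain ⟨_, ⟨n, rfl⟩, hpy⟩ := Metric.mem_thickening_iff.mp hp
  have hp₂₀ : 0 < p.2 := (hy 0).trans hp₂.1
  refine Metric.mem_thickening_iff.mpr ⟨(y n / p.2, p.2),
    mk_div_mem_saddleTrajectories ⟨(hanti n.zero_le).trans hp₂.1.le, hp₂.2⟩, ?_⟩
  have hδ₀ : 0 < δ := pos_of_mul_pos_right (dist_nonneg.trans_lt hpy) (hy 0).le
  rw [Prod.dist_eq, dist_self, max_eq_left dist_nonneg, Real.dist_eq]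
  rw [Real.dist_eq] at hpy
  calc |p.1 - y n / p.2| = |p.2 * p.1 - y n| / p.2 := by
        rw [← abs_of_pos hp₂₀, ← abs_div, abs_of_pos hp₂₀]; congr 1; field_simp
    _ < y 0 * δ / p.2 := by gcongr
    _ < δ := by rw [div_lt_iff₀ hp₂₀]; nlinarith [hp₂.1]

theorem volume_thickening_saddleTrajectories_le (hy : ∀ n, 0 < y n) {δ : ℝ} (hδ₀ : 0 < δ)
    (hδ : δ ≤ 1 / 2) :
    volume (Metric.thickening δ (saddleTrajectories y)) ≤
      volume (Metric.thickening (3 * δ) (range y)) * ENNReal.ofReal (1 - log δ) := by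
  set V := volume (Metric.thickening (3 * δ) (range y))
  have hbox : volume (Ioo (-δ) (1 + δ) ×ˢ Ioc (-δ) (2 * δ)) ≤ V := calc
    _ = ENNReal.ofReal ((1 + 2 * δ) * (3 * δ)) := by
      rw [Measure.volume_eq_prod, Measure.prod_prod, Real.volume_Ioo, Real.volume_Ioc,
        ← ENNReal.ofReal_mul (by linarith)]
      ring_nf
    _ ≤ volume (Metric.ball (y 0) (3 * δ)) := by
      rw [Real.volume_ball]; gcongr; nlinarith
    _ ≤ V := measure_mono (Metric.ball_subset_thickening (mem_range_self 0) _)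
  have hslab : volume {p : ℝ × ℝ | p.2 ∈ Ioc (2 * δ) (1 + δ) ∧
      p.2 * p.1 ∈ Metric.thickening (3 * δ) (range y)} ≤ V * ENNReal.ofReal (- log δ) := by
    rw [volume_setOf_snd_mem_mul_mem measurableSet_Ioc
      (fun t ht => (by linarith : 0 < 2 * δ).trans ht.1) Metric.isOpen_thickening.measurableSet,
      lintegral_ofReal_inv_Ioc (by linarith) (by linarith), ← log_inv]
    gcongr
    rw [div_le_iff₀ (by linarith), inv_mul_eq_div, le_div_iff₀ hδ₀]; nlinarith
  calc _ ≤ _ := measure_mono (thickening_saddleTrajectories_subset hy (by linarith))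
    _ ≤ _ := measure_union_le _ _
    _ ≤ V + V * ENNReal.ofReal (- log δ) := add_le_add hbox hslab
    _ = _ := by
      rw [sub_eq_add_neg, ENNReal.ofReal_add zero_le_one
        (neg_nonneg.2 (log_nonpos hδ₀.le (by linarith))), ENNReal.ofReal_one, mul_add, mul_one]

theorem le_volume_thickening_saddleTrajectories (hy : ∀ n, 0 < y n) (hanti : Antitone y)
    (hy₀ : y 0 ≤ 1) (δ : ℝ) :
    volume (Metric.thickening (y 0 * δ) (range y)) * ENNReal.ofReal (log (1 / y 0)) ≤
      volume (Metric.thickening δ (saddleTrajectories y)) := by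
  rw [← lintegral_ofReal_inv_Ioc (hy 0) hy₀, ← volume_setOf_snd_mem_mul_mem measurableSet_Ioc
    (fun t ht => (hy 0).trans ht.1) Metric.isOpen_thickening.measurableSet]
  exact measure_mono (setOf_snd_mem_mul_mem_subset_thickening_saddleTrajectories hy hanti δ)

end saddleTrajectories

theorem toReal_volume_thickening_pos {X : Type*} [PseudoMetricSpace X] [ProperSpace X]
    [MeasureSpace X] [IsFiniteMeasureOnCompacts (volume : Measure X)]
    [(volume : Measure X).IsOpenPosMeasure] {s : Set X} (hs : Bornology.IsBounded s)
    (hne : s.Nonempty) {δ : ℝ} (hδ : 0 < δ) :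
    0 < (volume (Metric.thickening δ s)).toReal :=
  ENNReal.toReal_pos (Metric.isOpen_thickening.measure_ne_zero _
    ((Metric.thickening_nonempty_iff_of_pos hδ).mpr hne)) hs.thickening.measure_lt_top.ne

theorem dim_union_trajectories_resonant_saddle_general (y : ℕ → ℝ) (d : ℝ)
    (hpos : ∀ n, 0 < y n) (hlt1 : ∀ n, y n < 1)
    (hanti : StrictAnti y)
    (hdim : Tendsto
      (fun δ : ℝ => 1 - Real.log ((volume (Metric.thickening δ (Set.range y))).toReal) / Real.log δ)
      (nhdsWithin 0 (Ioi 0)) (nhds d)) :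
    Tendsto
      (fun δ : ℝ => 2 - Real.log ((volume (Metric.thickening δ
          (⋃ n : ℕ, {p : ℝ × ℝ | p.2 ∈ Icc (y n) 1 ∧ p.1 = y n / p.2}))).toReal)
        / Real.log δ)
      (nhdsWithin 0 (Ioi 0)) (nhds (1 + d)) := by
  set V := fun ε => (volume (Metric.thickening ε (range y))).toReal
  have hY : Bornology.IsBounded (range y) :=
    (Metric.isBounded_Icc 0 1).subset (range_subset_iff.2 fun n => ⟨(hpos n).le, (hlt1 n).le⟩)
  have hc : 0 < log (1 / y 0) := log_pos (one_lt_one_div (hpos 0) (hlt1 0))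
  have hG : ∀ δ, volume (Metric.thickening δ (saddleTrajectories y)) ≠ ⊤ := fun δ =>
    (isBounded_saddleTrajectories hpos).thickening.measure_lt_top.ne
  have hlog_le : ∀ᶠ δ in 𝓝[>] 0, log (1 / y 0) * V (y 0 * δ) ≤
      (volume (Metric.thickening δ (saddleTrajectories y))).toReal :=
    Eventually.of_forall fun δ => by
      have h := ENNReal.toReal_mono (hG δ)
        (le_volume_thickening_saddleTrajectories hpos hanti.antitone (hlt1 0).le δ)
      rwa [ENNReal.toReal_mul, ENNReal.toReal_ofReal hc.le, mul_comm] at h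
  have hle_log : ∀ᶠ δ in 𝓝[>] 0, (volume (Metric.thickening δ (saddleTrajectories y))).toReal ≤
      (1 - log δ) * V (3 * δ) := by
    filter_upwards [Ioc_mem_nhdsGT one_half_pos] with δ hδ
    have h := ENNReal.toReal_mono (ENNReal.mul_ne_top hY.thickening.measure_lt_top.ne
      ENNReal.ofReal_ne_top) (volume_thickening_saddleTrajectories_le hpos hδ.1 hδ.2)
    have hlogδ : log δ ≤ 0 := log_nonpos hδ.1.le (by linarith [hδ.2])
    rwa [ENNReal.toReal_mul, ENNReal.toReal_ofReal (by linarith), mul_comm] at h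
  have hV : Tendsto (fun ε => log (V ε) / log ε) (𝓝[>] 0) (𝓝 (1 - d)) := by
    simpa using (tendsto_const_nhds (x := (1 : ℝ))).sub hdim
  have hlim := tendsto_log_div_log_of_le_of_le (hpos 0) three_pos hc
    (fun ε hε => toReal_volume_thickening_pos hY (range_nonempty y) hε) hV hlog_le hle_log
  have h := (tendsto_const_nhds (x := (2 : ℝ))).sub hlim
  rwa [show (2 : ℝ) - (1 - d) = 1 + d by ring] at h

/-- Minkowski dimension of the union of trajectories `Γ_n` (graphs of `x(y) = y_n/y`
over `[y_n, 1]`) of the resonant linear saddle `ẋ = -x`, `ẏ = y`: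
it equals `1 + dim_B {y_n}`. -/
theorem dim_union_trajectories_resonant_saddle (y : ℕ → ℝ) (d : ℝ)
    (hpos : ∀ n, 0 < y n) (hlt1 : ∀ n, y n < 1)
    (hanti : StrictAnti y) (hlim : Tendsto y atTop (nhds 0))
    (hgaps : StrictAnti fun n => y n - y (n + 1))
    (hd0 : 0 ≤ d) (hd1 : d < 1)
    (hdim : Tendsto
      (fun δ : ℝ => 1 - Real.log ((volume (Metric.thickening δ (Set.range y))).toReal) / Real.log δ)
      (nhdsWithin 0 (Ioi 0)) (nhds d)) :
    Tendsto
      (fun δ : ℝ => 2 - Real.log ((volume (Metric.thickening δ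
          (⋃ n : ℕ, {p : ℝ × ℝ | p.2 ∈ Icc (y n) 1 ∧ p.1 = y n / p.2}))).toReal)
        / Real.log δ)
      (nhdsWithin 0 (Ioi 0)) (nhds (1 + d)) :=
  dim_union_trajectories_resonant_saddle_general y d hpos hlt1 hanti hdim
end

section
/- Let f: (0, ε) → R be a positive function with f(x) → 0 as x → 0+ satisfying f(x) ∼ A x^r for constants A > 0 and r > 0, r ≠ 1 (a strongly hyperbolic first-return map). Then any orbit x_{n+1} = f(x_n) converging to 0 monotonically, viewed as a subset of R, has Minkowski dimension 0. -/
/-!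
Along the orbit `x (n + 1) / x n ≈ A * x n ^ (r - 1)`. For `r < 1` this ratio would blow up,
which a decreasing orbit forbids; so `r > 1`, the ratio tends to `0` and the orbit decays at
least geometrically. Then only `O(log (1 / δ))` orbit points lie above `δ` and all others lie in
`[0, δ]`, so `2 δ ≤ |Y_δ| ≤ O(δ log (1 / δ))`, whence `log |Y_δ| / log δ → 1`.
-/

open Filter MeasureTheory Set

open Metric Real Topology

noncomputable def minkowskiQuotient (Y : Set ℝ) (δ : ℝ) : ℝ :=
  1 - log (volume (thickening δ Y)).toReal / log δ

theorem ofReal_two_mul_le_volume_thickening {Y : Set ℝ} (hY : Y.Nonempty) (δ : ℝ) :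
    ENNReal.ofReal (2 * δ) ≤ volume (thickening δ Y) := by
  obtain ⟨y, hy⟩ := hY
  rw [← Real.volume_ball y δ]
  exact measure_mono (ball_subset_thickening hy δ)

theorem tendsto_log_add_mul_div_atTop (a : ℝ) {b : ℝ} (hb : 0 < b) :
    Tendsto (fun t => log (a + b * t) / t) atTop (𝓝 0) := by
  have hlin : Tendsto (fun t => a + b * t) atTop atTop :=
    tendsto_atTop_add_const_left _ a (tendsto_id.const_mul_atTop hb)
  have hlog : Tendsto (fun t => log (a + b * t) / (a + b * t)) atTop (𝓝 0) :=
    isLittleO_log_id_atTop.tendsto_div_nhds_zero.comp hlin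
  have hslope : Tendsto (fun t => a * t⁻¹ + b) atTop (𝓝 b) := by
    simpa using (tendsto_inv_atTop_zero.const_mul a).add_const b
  have hprod := hlog.mul hslope
  rw [zero_mul] at hprod
  refine hprod.congr' ?_
  filter_upwards [hlin.eventually_gt_atTop 0, eventually_gt_atTop 0] with t hlin ht
  field_simp

theorem tendsto_minkowskiQuotient_of_volume_le {Y : Set ℝ} (hY : Y.Nonempty) {a b : ℝ}
    (hb : 0 < b)
    (hvol : ∀ᶠ δ in 𝓝[>] 0,
      volume (thickening δ Y) ≤ ENNReal.ofReal ((a + b * -log δ) * δ)) :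
    Tendsto (minkowskiQuotient Y) (𝓝[>] 0) (𝓝 0) := by
  have hneglog : Tendsto (fun δ => -log δ) (𝓝[>] 0) atTop :=
    tendsto_neg_atBot_atTop.comp tendsto_log_nhdsGT_zero
  have hbounds : ∀ᶠ δ in 𝓝[>] 0, log 2 / -log δ ≤ minkowskiQuotient Y δ ∧
      minkowskiQuotient Y δ ≤ log (a + b * -log δ) / -log δ := by
    filter_upwards [hvol, Ioo_mem_nhdsGT one_pos] with δ hup ⟨hδ0, hδ1⟩
    have hlow := ofReal_two_mul_le_volume_thickening hY δ
    have hfin : volume (thickening δ Y) ≠ ⊤ := ne_top_of_le_ne_top ENNReal.ofReal_ne_top hup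
    have hg : 2 * δ ≤ (volume (thickening δ Y)).toReal :=
      (ENNReal.ofReal_le_iff_le_toReal hfin).mp hlow
    have hpos : 0 ≤ (a + b * -log δ) * δ := by
      rcases ENNReal.ofReal_le_ofReal_iff'.mp (hlow.trans hup) with h | h <;> linarith
    have hG : (volume (thickening δ Y)).toReal / δ ≤ a + b * -log δ :=
      (div_le_iff₀ hδ0).mpr (ENNReal.toReal_le_of_le_ofReal hpos hup)
    have hlogδ : log δ < 0 := log_neg hδ0 hδ1
    have hgδ : 2 ≤ (volume (thickening δ Y)).toReal / δ := (le_div_iff₀ hδ0).mpr hg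
    have hquot : minkowskiQuotient Y δ =
        log ((volume (thickening δ Y)).toReal / δ) / -log δ := by
      rw [minkowskiQuotient, log_div (by linarith) hδ0.ne']
      field_simp [hlogδ.ne]
      ring
    rw [hquot]
    have ht : 0 < -log δ := neg_pos.mpr hlogδ
    constructor
    · gcongr
    · gcongr
  exact tendsto_of_tendsto_of_tendsto_of_le_of_le' (tendsto_const_nhds.div_atTop hneglog)
    ((tendsto_log_add_mul_div_atTop a hb).comp hneglog) (hbounds.mono fun _ h => h.1)
    (hbounds.mono fun _ h => h.2)

theorem volume_thickening_range_le {x : ℕ → ℝ} (hx : Antitone x) (hx0 : ∀ n, 0 ≤ x n)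
    {δ : ℝ} (hδ : 0 ≤ δ) {N : ℕ} (hN : x N ≤ δ) :
    volume (thickening δ (range x)) ≤ ENNReal.ofReal ((2 * N + 3) * δ) := by
  have hcover : thickening δ (range x) ⊆
      (⋃ n ∈ Finset.range N, ball (x n) δ) ∪ Ioo (-δ) (2 * δ) := by
    intro y hy
    obtain ⟨_, ⟨n, rfl⟩, hdist⟩ := mem_thickening_iff.mp hy
    rcases lt_or_ge n N with hn | hn
    · exact Or.inl (mem_biUnion (Finset.mem_range.mpr hn) hdist)
    · have hxn : x n ≤ δ := (hx hn).trans hN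
      have := abs_lt.mp (Real.dist_eq y (x n) ▸ hdist)
      exact Or.inr ⟨by linarith [hx0 n], by linarith⟩
  calc volume (thickening δ (range x))
      ≤ volume (⋃ n ∈ Finset.range N, ball (x n) δ) + volume (Ioo (-δ) (2 * δ)) :=
        (measure_mono hcover).trans (measure_union_le _ _)
    _ ≤ ∑ n ∈ Finset.range N, volume (ball (x n) δ) + volume (Ioo (-δ) (2 * δ)) := by
        gcongr
        exact measure_biUnion_finset_le _ _
    _ = ENNReal.ofReal ((2 * N + 3) * δ) := by
        simp only [Real.volume_ball, Real.volume_Ioo, Finset.sum_const, Finset.card_range,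
          nsmul_eq_mul]
        rw [← ENNReal.ofReal_natCast, ← ENNReal.ofReal_mul (by positivity),
          ← ENNReal.ofReal_add (by positivity) (by linarith)]
        ring_nf

theorem exists_le_of_le_geometric {x : ℕ → ℝ} {C q δ : ℝ} (hC : 0 < C) (hq0 : 0 < q)
    (hq1 : q < 1) (hdecay : ∀ n, x n ≤ C * q ^ n) (hδ0 : 0 < δ) (hδC : δ ≤ C) :
    ∃ N : ℕ, x N ≤ δ ∧ (N : ℝ) ≤ log (δ / C) / log q + 1 := by
  have hlogq : log q < 0 := log_neg hq0 hq1
  have hexp : 0 ≤ log (δ / C) / log q :=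
    div_nonneg_of_nonpos (log_nonpos (by positivity) ((div_le_one hC).mpr hδC)) hlogq.le
  set N := ⌈log (δ / C) / log q⌉₊
  refine ⟨N, ?_, (Nat.ceil_lt_add_one hexp).le⟩
  have hqN : q ^ N ≤ δ / C := by
    rw [← log_le_log_iff (by positivity) (by positivity), log_pow]
    exact (div_le_iff_of_neg hlogq).mp (Nat.le_ceil _)
  calc x N ≤ C * q ^ N := hdecay N
    _ ≤ C * (δ / C) := by gcongr
    _ = δ := mul_div_cancel₀ δ hC.ne'

theorem tendsto_minkowskiQuotient_range_of_le_geometric {x : ℕ → ℝ} {C q : ℝ}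
    (hx : Antitone x) (hx0 : ∀ n, 0 ≤ x n) (hC : 0 < C) (hq0 : 0 < q) (hq1 : q < 1)
    (hdecay : ∀ n, x n ≤ C * q ^ n) :
    Tendsto (minkowskiQuotient (range x)) (𝓝[>] 0) (𝓝 0) := by
  have hlogq : log q < 0 := log_neg hq0 hq1
  refine tendsto_minkowskiQuotient_of_volume_le (range_nonempty x) (a := 5 - 2 * log C / log q)
    (div_pos_of_neg_of_neg (by norm_num : (-2 : ℝ) < 0) hlogq) ?_
  filter_upwards [Ioo_mem_nhdsGT hC] with δ ⟨hδ0, hδC⟩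
  obtain ⟨N, hxN, hN⟩ := exists_le_of_le_geometric hC hq0 hq1 hdecay hδ0 hδC.le
  refine (volume_thickening_range_le hx hx0 hδ0.le hxN).trans (ENNReal.ofReal_le_ofReal ?_)
  rw [log_div hδ0.ne' hC.ne'] at hN
  refine mul_le_mul_of_nonneg_right ?_ hδ0.le
  calc (2 * N + 3 : ℝ) ≤ 2 * ((log δ - log C) / log q + 1) + 3 := by linarith
    _ = 5 - 2 * log C / log q + -2 / log q * -log δ := by ring

theorem le_geometric_of_forall_ge_le_mul {x : ℕ → ℝ} {q : ℝ} {N₀ : ℕ} (hx : Antitone x)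
    (hx0 : 0 ≤ x 0) (hq0 : 0 < q) (hq1 : q ≤ 1) (hstep : ∀ n ≥ N₀, x (n + 1) ≤ q * x n)
    (n : ℕ) : x n ≤ x 0 / q ^ N₀ * q ^ n := by
  have htail : ∀ k, x (N₀ + k) ≤ x 0 * q ^ k := by
    intro k
    induction k with
    | zero => simpa using hx (Nat.zero_le N₀)
    | succ k ih =>
      calc x (N₀ + (k + 1)) ≤ q * x (N₀ + k) := hstep _ (Nat.le_add_right N₀ k)
        _ ≤ q * (x 0 * q ^ k) := by gcongr
        _ = x 0 * q ^ (k + 1) := by ring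
  rcases le_or_gt n N₀ with hn | hn
  · have hpow : q ^ N₀ ≤ q ^ n := pow_le_pow_of_le_one hq0.le hq1 hn
    calc x n ≤ x 0 := hx (Nat.zero_le n)
      _ ≤ x 0 * (q ^ n / q ^ N₀) :=
        le_mul_of_one_le_right hx0 ((one_le_div (by positivity)).mpr hpow)
      _ = x 0 / q ^ N₀ * q ^ n := by ring
  · obtain ⟨k, rfl⟩ := Nat.exists_eq_add_of_le hn.le
    calc x (N₀ + k) ≤ x 0 * q ^ k := htail k
      _ = x 0 / q ^ N₀ * q ^ (N₀ + k) := by rw [pow_add]; field_simp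

theorem exists_le_geometric_of_tendsto_succ_div_self {x : ℕ → ℝ} (hx : Antitone x)
    (hpos : ∀ n, 0 < x n) (hratio : Tendsto (fun n => x (n + 1) / x n) atTop (𝓝 0)) :
    ∃ C > 0, ∀ n, x n ≤ C * (1 / 2) ^ n := by
  obtain ⟨N₀, hN₀⟩ := eventually_atTop.mp (hratio.eventually (ge_mem_nhds one_half_pos))
  have hstep : ∀ n ≥ N₀, x (n + 1) ≤ 1 / 2 * x n := fun n hn =>
    (div_le_iff₀ (hpos n)).mp (hN₀ n hn)
  exact ⟨_, by have := hpos 0; positivity,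
    le_geometric_of_forall_ge_le_mul hx (hpos 0).le one_half_pos (by norm_num) hstep⟩

theorem div_eq_div_mul_mul_rpow_sub_one {a b A r : ℝ} (ha : 0 < a) (hA : A ≠ 0) :
    b / a = b / (A * a ^ r) * (A * a ^ (r - 1)) := by
  rw [rpow_sub ha, rpow_one]
  field_simp

section Orbit

variable {y : ℕ → ℝ} {A r : ℝ}

theorem one_le_of_antitone_of_tendsto_div_rpow (hA : 0 < A) (hy : Antitone y)
    (hlim : Tendsto y atTop (𝓝[>] 0))
    (hB : Tendsto (fun n => y (n + 1) / (A * y n ^ r)) atTop (𝓝 1)) :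
    1 ≤ r := by
  by_contra! hr
  have hpos : ∀ᶠ n in atTop, 0 < y n := hlim.eventually self_mem_nhdsWithin
  have hgrow : Tendsto (fun n => A * y n ^ (r - 1)) atTop atTop :=
    ((tendsto_rpow_neg_nhdsGT_zero (by linarith)).comp hlim).const_mul_atTop hA
  have hratio : Tendsto (fun n => y (n + 1) / y n) atTop atTop := by
    refine (hB.pos_mul_atTop one_pos hgrow).congr' ?_
    filter_upwards [hpos] with n hn
    exact (div_eq_div_mul_mul_rpow_sub_one hn hA.ne').symm
  obtain ⟨n, hn, hgt⟩ := (hpos.and (hratio.eventually_gt_atTop 1)).exists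
  exact hgt.not_ge ((div_le_one hn).mpr (hy n.le_succ))

theorem tendsto_succ_div_self_of_tendsto_div_rpow (hA : A ≠ 0) (hr : 1 < r)
    (hlim : Tendsto y atTop (𝓝[>] 0))
    (hB : Tendsto (fun n => y (n + 1) / (A * y n ^ r)) atTop (𝓝 1)) :
    Tendsto (fun n => y (n + 1) / y n) atTop (𝓝 0) := by
  have hsmall : Tendsto (fun n => A * y n ^ (r - 1)) atTop (𝓝 0) := by
    simpa using ((hlim.mono_right nhdsWithin_le_nhds).rpow_const_nhds_zero
      (sub_pos.mpr hr)).const_mul A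
  have hprod := hB.mul hsmall
  rw [one_mul] at hprod
  refine hprod.congr' ?_
  filter_upwards [hlim.eventually self_mem_nhdsWithin] with n hn
  exact (div_eq_div_mul_mul_rpow_sub_one hn hA).symm

end Orbit

theorem orbit_of_strongly_hyperbolic_map_dim_zero_general (ε A r : ℝ)
    (hA : 0 < A) (hr1 : r ≠ 1)
    (f : ℝ → ℝ)
    (hasymp : Tendsto (fun x => f x / (A * x ^ r)) (nhdsWithin 0 (Ioi 0)) (nhds 1))
    (x : ℕ → ℝ) (hx0 : ∀ n, x n ∈ Ioo (0 : ℝ) ε)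
    (horb : ∀ n, x (n + 1) = f (x n))
    (hanti : StrictAnti x) (hlim : Tendsto x atTop (nhds 0)) :
    Tendsto
      (fun δ : ℝ => 1 - Real.log ((volume (Metric.thickening δ (Set.range x))).toReal) / Real.log δ)
      (nhdsWithin 0 (Ioi 0)) (nhds 0) := by
  have hpos : ∀ n, 0 < x n := fun n => (hx0 n).1
  have hlim' : Tendsto x atTop (𝓝[>] 0) := tendsto_nhdsWithin_iff.mpr ⟨hlim, .of_forall hpos⟩
  have hB : Tendsto (fun n => x (n + 1) / (A * x n ^ r)) atTop (𝓝 1) := by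
    simpa only [horb, Function.comp_def] using hasymp.comp hlim'
  have hr : 1 < r :=
    (one_le_of_antitone_of_tendsto_div_rpow hA hanti.antitone hlim' hB).lt_of_ne hr1.symm
  obtain ⟨C, hC, hdecay⟩ := exists_le_geometric_of_tendsto_succ_div_self hanti.antitone hpos
    (tendsto_succ_div_self_of_tendsto_div_rpow hA.ne' hr hlim' hB)
  exact tendsto_minkowskiQuotient_range_of_le_geometric hanti.antitone (fun n => (hpos n).le) hC
    one_half_pos one_half_lt_one hdecay

/-- Orbits of a strongly hyperbolic first-return map `f(x) ∼ A x^r` (`r > 0`, `r ≠ 1`)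
converging monotonically to `0` have Minkowski dimension `0`. -/
theorem orbit_of_strongly_hyperbolic_map_dim_zero (ε A r : ℝ)
    (hε : 0 < ε) (hA : 0 < A) (hr : 0 < r) (hr1 : r ≠ 1)
    (f : ℝ → ℝ) (hfpos : ∀ x ∈ Ioo (0 : ℝ) ε, 0 < f x)
    (hasymp : Tendsto (fun x => f x / (A * x ^ r)) (nhdsWithin 0 (Ioi 0)) (nhds 1))
    (x : ℕ → ℝ) (hx0 : ∀ n, x n ∈ Ioo (0 : ℝ) ε)
    (horb : ∀ n, x (n + 1) = f (x n))
    (hanti : StrictAnti x) (hlim : Tendsto x atTop (nhds 0)) :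
    Tendsto
      (fun δ : ℝ => 1 - Real.log ((volume (Metric.thickening δ (Set.range x))).toReal) / Real.log δ)
      (nhdsWithin 0 (Ioi 0)) (nhds 0) :=
  orbit_of_strongly_hyperbolic_map_dim_zero_general ε A r hA hr1 f hasymp x hx0 horb hanti hlim
end

section
/- For an orbit of a map tangent to the identity P(x) = x − β x^k + o(x^k), with β > 0 and integer k ≥ 2, converging to 0, the box dimension of the orbit equals 1 − 1/k. -/
open Filter MeasureTheory Set

lemma y_div_n (ε β : ℝ) (k : ℕ) (hβ : 0 < β) (hk : 2 ≤ k)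
    (P : ℝ → ℝ)
    (hP : Tendsto (fun x : ℝ => (P x - (x - β * x ^ k)) / x ^ k) (nhdsWithin 0 (Ioi 0)) (nhds 0))
    (x : ℕ → ℝ) (hx0 : ∀ n, x n ∈ Ioo (0:ℝ) ε)
    (horb : ∀ n, x (n + 1) = P (x n))
    (hlim : Tendsto x atTop (nhds 0)) :
    Tendsto (fun n : ℕ => (x n ^ (k-1))⁻¹ / n) atTop (nhds (β*((k:ℝ)-1))) := by
  have hxpos : ∀ n, 0 < x n := fun n => (hx0 n).1
  set r : ℝ → ℝ := fun t => (P t - (t - β * t ^ k)) / t ^ k with hrdef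
  have hxlim' : Tendsto x atTop (nhdsWithin 0 (Ioi 0)) :=
    tendsto_nhdsWithin_iff.mpr ⟨hlim, Eventually.of_forall fun n => hxpos n⟩
  have hr : Tendsto (fun n => r (x n)) atTop (nhds 0) := hP.comp hxlim'
  have key : ∀ n, x (n+1) = x n - (β - r (x n)) * x n ^ k := by
    intro n
    have hne : x n ^ k ≠ 0 := pow_ne_zero _ (hxpos n).ne'
    have : r (x n) * x n ^ k = P (x n) - (x n - β * x n ^ k) := by
      rw [hrdef]; field_simp
    rw [horb n]; nlinarith [this]
  set u : ℕ → ℝ := fun n => (β - r (x n)) * x n ^ (k-1) with hudef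
  have hxk : ∀ n, x n ^ k = x n * x n ^ (k-1) := by
    intro n
    conv_lhs => rw [show k = 1 + (k-1) by omega]
    rw [pow_add, pow_one]
  have key2 : ∀ n, x (n+1) = x n * (1 - u n) := by
    intro n; rw [key n, hxk n]; ring
  have hu0 : Tendsto u atTop (nhds 0) := by
    have h1 : Tendsto (fun n => β - r (x n)) atTop (nhds β) := by
      simpa using tendsto_const_nhds.sub hr
    have h2 : Tendsto (fun n => x n ^ (k-1)) atTop (nhds 0) := by
      have := hlim.pow (k-1)
      simpa [zero_pow (show k - 1 ≠ 0 by omega)] using this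
    simpa using h1.mul h2
  have hupos : ∀ᶠ n in atTop, 0 < u n := by
    have : ∀ᶠ n in atTop, β - r (x n) > 0 := by
      have : ∀ᶠ n in atTop, r (x n) < β := hr.eventually_lt_const hβ
      filter_upwards [this] with n h; linarith
    filter_upwards [this] with n h
    exact mul_pos h (pow_pos (hxpos n) _)
  have h1u : ∀ n, 0 < 1 - u n := by
    intro n
    have := key2 n
    have h2 := hxpos (n+1)
    rw [this] at h2
    have h3 : 1 - u n = x (n+1) / x n := by
      rw [key2 n, mul_comm, mul_div_assoc, div_self (hxpos n).ne', mul_one]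
    rw [h3]; exact div_pos (hxpos (n+1)) (hxpos n)
  set g : ℝ → ℝ := fun v => (((1-v) ^ (k-1))⁻¹ - 1) / v with hgdef
  have hg : Tendsto g (nhdsWithin 0 {(0:ℝ)}ᶜ) (nhds ((k:ℝ)-1)) := by
    have hd : HasDerivAt (fun v : ℝ => ((1-v)^(k-1))⁻¹) ((k:ℝ)-1) 0 := by
      have h1 : HasDerivAt (fun v : ℝ => 1 - v) (-1) 0 := (hasDerivAt_id 0).const_sub 1
      have h2 := h1.pow (k-1)
      have h3 := h2.inv (by norm_num)
      have h3' : HasDerivAt (fun v : ℝ => ((1-v)^(k-1))⁻¹) _ 0 := h3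
      convert h3' using 1
      have hc : ((k-1:ℕ):ℝ) = (k:ℝ) - 1 := by push_cast [Nat.cast_sub (by omega : 1 ≤ k)]; ring
      simp [hc]
    have := hasDerivAt_iff_tendsto_slope.mp hd
    refine this.congr' ?_
    filter_upwards [self_mem_nhdsWithin] with v (hv : v ≠ 0)
    rw [slope_def_field, hgdef]
    norm_num
  -- the increments of y n = (x n ^ (k-1))⁻¹ tend to (k-1)β
  have hune : ∀ᶠ n in atTop, u n ≠ 0 := by
    filter_upwards [hupos] with n h; exact h.ne'
  have hbr : ∀ᶠ n in atTop, β - r (x n) ≠ 0 := by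
    have : ∀ᶠ n in atTop, r (x n) < β := hr.eventually_lt_const hβ
    filter_upwards [this] with n h; intro hc; linarith
  have hu' : Tendsto u atTop (nhdsWithin 0 {(0:ℝ)}ᶜ) :=
    tendsto_nhdsWithin_iff.mpr ⟨hu0, hune⟩
  have hdiff : ∀ᶠ n in atTop,
      (x (n+1) ^ (k-1))⁻¹ - (x n ^(k-1))⁻¹ = (β - r (x n)) * g (u n) := by
    filter_upwards [hune, hbr] with n hn hb
    have hx1 : x (n+1) ^ (k-1) = x n ^ (k-1) * (1 - u n)^(k-1) := by
      rw [key2 n, mul_pow]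
    rw [hx1, hgdef]
    have h1 : (1 - u n) ^ (k-1) ≠ 0 := pow_ne_zero _ (h1u n).ne'
    have h2 : x n ^ (k-1) ≠ 0 := pow_ne_zero _ (hxpos n).ne'
    have h3 : u n = (β - r (x n)) * x n ^ (k-1) := rfl
    field_simp
    rw [h3]; ring
  have hdlim : Tendsto (fun n => (x (n+1)^(k-1))⁻¹ - (x n^(k-1))⁻¹) atTop
      (nhds (β*((k:ℝ)-1))) := by
    have h1 : Tendsto (fun n => β - r (x n)) atTop (nhds β) := by
      simpa using tendsto_const_nhds.sub hr
    exact Tendsto.congr' (hdiff.mono fun n h => h.symm) (h1.mul (hg.comp hu'))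
  have hc := hdlim.cesaro
  have heq : ∀ n : ℕ, ((n:ℝ)⁻¹ * ∑ i ∈ Finset.range n, ((x (i+1)^(k-1))⁻¹ - (x i^(k-1))⁻¹))
      + (x 0 ^ (k-1))⁻¹ / n = (x n ^ (k-1))⁻¹ / n := by
    intro n
    rw [Finset.sum_range_sub (fun i => (x i ^ (k-1))⁻¹)]
    ring
  have h0 : Tendsto (fun n : ℕ => (x 0 ^ (k-1))⁻¹ / n) atTop (nhds 0) :=
    tendsto_const_div_atTop_nhds_zero_nat _
  have := hc.add h0
  rw [add_zero] at this
  exact this.congr heq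

lemma orbit_bounds (ε β : ℝ) (k : ℕ) (hβ : 0 < β) (hk : 2 ≤ k)
    (P : ℝ → ℝ)
    (hP : Tendsto (fun x : ℝ => (P x - (x - β * x ^ k)) / x ^ k) (nhdsWithin 0 (Ioi 0)) (nhds 0))
    (x : ℕ → ℝ) (hx0 : ∀ n, x n ∈ Ioo (0:ℝ) ε)
    (horb : ∀ n, x (n + 1) = P (x n))
    (hlim : Tendsto x atTop (nhds 0)) :
    ∃ c1 c2 : ℝ, 0 < c1 ∧ 0 < c2 ∧ ∃ N0 : ℕ, 1 ≤ N0 ∧ ∀ n, N0 ≤ n →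
      c1 * (n:ℝ) ^ (-((k:ℝ)-1)⁻¹) ≤ x n ∧ x n ≤ c2 * (n:ℝ) ^ (-((k:ℝ)-1)⁻¹) ∧
      c1 * (n:ℝ) ^ (-((k:ℝ)/((k:ℝ)-1))) ≤ x n - x (n+1) ∧
      x n - x (n+1) ≤ c2 * (n:ℝ) ^ (-((k:ℝ)/((k:ℝ)-1))) := by
  have hxpos : ∀ n, 0 < x n := fun n => (hx0 n).1
  have hk1 : (1:ℝ) ≤ (k:ℝ) - 1 := by
    have : (2:ℝ) ≤ (k:ℝ) := by exact_mod_cast hk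
    linarith
  set c : ℝ := β * ((k:ℝ)-1) with hcdef
  have hc : 0 < c := mul_pos hβ (by linarith)
  set e : ℝ := ((k:ℝ)-1)⁻¹ with hedef
  have he : 0 < e := by positivity
  have hy := y_div_n ε β k hβ hk P hP x hx0 horb hlim
  set r : ℝ → ℝ := fun t => (P t - (t - β * t ^ k)) / t ^ k with hrdef
  have hxlim' : Tendsto x atTop (nhdsWithin 0 (Ioi 0)) :=
    tendsto_nhdsWithin_iff.mpr ⟨hlim, Eventually.of_forall fun n => hxpos n⟩
  have hr : Tendsto (fun n => r (x n)) atTop (nhds 0) := hP.comp hxlim'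
  have key : ∀ n, x n - x (n+1) = (β - r (x n)) * x n ^ k := by
    intro n
    have hne : x n ^ k ≠ 0 := pow_ne_zero _ (hxpos n).ne'
    have : r (x n) * x n ^ k = P (x n) - (x n - β * x n ^ k) := by
      rw [hrdef]; field_simp
    rw [horb n]; nlinarith [this]
  have hyev : ∀ᶠ n in atTop, (x n ^ (k-1))⁻¹ / n ∈ Ioo (c/2) (2*c) :=
    hy.eventually (Ioo_mem_nhds (by rw [hcdef]; linarith) (by linarith))
  have hrev : ∀ᶠ n in atTop, r (x n) ∈ Ioo (-(β/2)) (β/2) :=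
    hr.eventually (Ioo_mem_nhds (by linarith) (by linarith))
  obtain ⟨N0, hN0⟩ := (hyev.and hrev).exists_forall_of_atTop
  refine ⟨min (((2*c)⁻¹) ^ e) ((β/2) * ((((2*c)⁻¹) ^ e))^k),
    max (((2/c)) ^ e) (2*β * (((2/c) ^ e))^k), ?_, ?_, max N0 1, le_max_right _ _, ?_⟩
  · positivity
  · positivity
  intro n hn
  have hn1 : (1:ℝ) ≤ (n:ℝ) := by exact_mod_cast le_trans (le_max_right N0 1) hn
  have hnpos : (0:ℝ) < n := by linarith
  obtain ⟨hy1, hr1⟩ := hN0 n (le_trans (le_max_left N0 1) hn)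
  have hypos : 0 < (x n ^ (k-1))⁻¹ := inv_pos.mpr (pow_pos (hxpos n) _)
  have h2cn : (0:ℝ) < 2*c*n := mul_pos (mul_pos two_pos hc) hnpos
  have hc2n : (0:ℝ) < (c/2)*n := mul_pos (by linarith) hnpos
  have hylo : (c/2) * n < (x n ^ (k-1))⁻¹ := (lt_div_iff₀ hnpos).mp hy1.1
  have hyhi : (x n ^ (k-1))⁻¹ < 2*c*n := (div_lt_iff₀ hnpos).mp hy1.2
  -- bounds on x n ^ (k-1)
  have hxk_lo : (2*c*n)⁻¹ < x n ^ (k-1) := by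
    rw [inv_lt_comm₀ h2cn (pow_pos (hxpos n) _)]
    exact hyhi
  have hxk_hi : x n ^ (k-1) < ((c/2)*n)⁻¹ := by
    rw [lt_inv_comm₀ (pow_pos (hxpos n) _) hc2n]
    exact hylo
  -- convert to bounds on x n via rpow
  have hkne : k - 1 ≠ 0 := by omega
  have hcast : (((k-1:ℕ)):ℝ) = (k:ℝ) - 1 := by
    push_cast [Nat.cast_sub (by omega : 1 ≤ k)]; ring
  have hxeq : x n = (x n ^ (k-1)) ^ e := by
    rw [hedef, ← hcast]
    exact (Real.pow_rpow_inv_natCast (hxpos n).le hkne).symm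
  have hxlo : ((2*c*n)⁻¹) ^ e ≤ x n := by
    rw [hxeq]
    exact Real.rpow_le_rpow (inv_nonneg.mpr h2cn.le) hxk_lo.le he.le
  have hxhi : x n ≤ (((c/2)*n)⁻¹) ^ e := by
    rw [hxeq]
    exact Real.rpow_le_rpow (pow_pos (hxpos n) _).le hxk_hi.le he.le
  -- rewrite powers
  have h2c : (0:ℝ) < 2*c := mul_pos two_pos hc
  have hsplit_lo : ((2*c*n)⁻¹) ^ e = ((2*c)⁻¹) ^ e * (n:ℝ) ^ (-e) := by
    rw [mul_inv, Real.mul_rpow (inv_nonneg.mpr h2c.le) (inv_nonneg.mpr hnpos.le),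
      Real.inv_rpow hnpos.le, ← Real.rpow_neg hnpos.le]
  have hsplit_hi : (((c/2)*n)⁻¹) ^ e = ((2/c)) ^ e * (n:ℝ) ^ (-e) := by
    rw [mul_inv, Real.mul_rpow (by positivity) (inv_nonneg.mpr hnpos.le),
      Real.inv_rpow hnpos.le, ← Real.rpow_neg hnpos.le]
    congr 2
    rw [inv_div]
  have hxlo' : ((2*c)⁻¹) ^ e * (n:ℝ) ^ (-e) ≤ x n := hsplit_lo ▸ hxlo
  have hxhi' : x n ≤ (2/c) ^ e * (n:ℝ) ^ (-e) := le_trans hxhi (le_of_eq hsplit_hi)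
  -- bounds on x n ^ k
  have hnege : (0:ℝ) ≤ (n:ℝ) ^ (-e) := Real.rpow_nonneg hnpos.le _
  have hpow_lo : (((2*c)⁻¹) ^ e)^k * ((n:ℝ) ^ (-e))^k ≤ x n ^ k := by
    rw [← mul_pow]
    exact pow_le_pow_left₀ (by positivity) hxlo' k
  have hpow_hi : x n ^ k ≤ ((2/c) ^ e)^k * ((n:ℝ) ^ (-e))^k := by
    rw [← mul_pow]
    exact pow_le_pow_left₀ (hxpos n).le hxhi' k
  have hek : ((n:ℝ) ^ (-e))^k = (n:ℝ) ^ (-((k:ℝ)/((k:ℝ)-1))) := by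
    rw [← Real.rpow_natCast ((n:ℝ)^(-e)) k, ← Real.rpow_mul hnpos.le]
    congr 1
    rw [hedef]; field_simp
  -- gap bounds
  have hbr_lo : β/2 ≤ β - r (x n) := by have := hr1.2; linarith
  have hbr_hi : β - r (x n) ≤ 2*β := by have := hr1.1; linarith
  have hxkpos : 0 < x n ^ k := pow_pos (hxpos n) _
  have hgap_lo : (β/2) * ((((2*c)⁻¹) ^ e)^k) * (n:ℝ) ^ (-((k:ℝ)/((k:ℝ)-1))) ≤ x n - x (n+1) := by
    rw [key n]
    calc (β/2) * ((((2*c)⁻¹) ^ e)^k) * (n:ℝ) ^ (-((k:ℝ)/((k:ℝ)-1)))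
        = (β/2) * ((((2*c)⁻¹) ^ e)^k * ((n:ℝ) ^ (-e))^k) := by rw [hek]; ring
      _ ≤ (β/2) * (x n ^ k) := by
          exact mul_le_mul_of_nonneg_left hpow_lo (by linarith)
      _ ≤ (β - r (x n)) * x n ^ k := mul_le_mul_of_nonneg_right hbr_lo hxkpos.le
  have hgap_hi : x n - x (n+1) ≤ (2*β) * (((2/c) ^ e)^k) * (n:ℝ) ^ (-((k:ℝ)/((k:ℝ)-1))) := by
    rw [key n]
    calc (β - r (x n)) * x n ^ k ≤ (2*β) * x n ^ k :=
          mul_le_mul_of_nonneg_right hbr_hi hxkpos.le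
      _ ≤ (2*β) * (((2/c) ^ e)^k * ((n:ℝ) ^ (-e))^k) :=
          mul_le_mul_of_nonneg_left hpow_hi (by linarith)
      _ = (2*β) * (((2/c) ^ e)^k) * (n:ℝ) ^ (-((k:ℝ)/((k:ℝ)-1))) := by rw [hek]; ring
  refine ⟨?_, ?_, ?_, ?_⟩
  · exact le_trans (mul_le_mul_of_nonneg_right (min_le_left _ _) hnege) hxlo'
  · exact le_trans hxhi' (mul_le_mul_of_nonneg_right (le_max_left _ _) hnege)
  · refine le_trans (mul_le_mul_of_nonneg_right (min_le_right _ _) (Real.rpow_nonneg hnpos.le _)) ?_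
    convert hgap_lo using 2
  · refine le_trans hgap_hi ?_
    refine mul_le_mul_of_nonneg_right ?_ (Real.rpow_nonneg hnpos.le _)
    exact le_max_right _ _

set_option maxHeartbeats 1000000 in
lemma volume_bounds (ε : ℝ) (k : ℕ) (hk : 2 ≤ k) (hε : 0 < ε)
    (x : ℕ → ℝ) (hx0 : ∀ n, x n ∈ Ioo (0:ℝ) ε) (hanti : StrictAnti x)
    (c1 c2 : ℝ) (hc1 : 0 < c1) (hc2 : 0 < c2) (N0 : ℕ) (hN01 : 1 ≤ N0)
    (hbd : ∀ n, N0 ≤ n →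
      c1 * (n:ℝ) ^ (-((k:ℝ)-1)⁻¹) ≤ x n ∧ x n ≤ c2 * (n:ℝ) ^ (-((k:ℝ)-1)⁻¹) ∧
      c1 * (n:ℝ) ^ (-((k:ℝ)/((k:ℝ)-1))) ≤ x n - x (n+1) ∧
      x n - x (n+1) ≤ c2 * (n:ℝ) ^ (-((k:ℝ)/((k:ℝ)-1)))) :
    ∃ D1 D2 δ0 : ℝ, 0 < D1 ∧ 0 < D2 ∧ 0 < δ0 ∧ δ0 ≤ 1 ∧ ∀ δ, 0 < δ → δ < δ0 →
      D1 * δ ^ ((k:ℝ)⁻¹) ≤ (volume (Metric.thickening δ (Set.range x))).toReal ∧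
      (volume (Metric.thickening δ (Set.range x))).toReal ≤ D2 * δ ^ ((k:ℝ)⁻¹) := by
  have hxpos : ∀ n, 0 < x n := fun n => (hx0 n).1
  have hk2 : (2:ℝ) ≤ (k:ℝ) := by exact_mod_cast hk
  have hk1 : (1:ℝ) ≤ (k:ℝ) - 1 := by linarith
  have hkpos : (0:ℝ) < k := by linarith
  set κ : ℝ := (k:ℝ)⁻¹ with hκdef
  have hκpos : 0 < κ := by positivity
  have hκlt : κ < 1 := by
    rw [hκdef, inv_lt_one_iff₀]; right; linarith
  have h1κ : 0 < 1 - κ := by linarith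
  set e : ℝ := ((k:ℝ)-1)⁻¹ with hedef
  have hepos : 0 < e := by rw [hedef]; positivity
  -- thickening as a union of intervals
  have hthick : ∀ δ : ℝ, Metric.thickening δ (Set.range x)
      = ⋃ n, Ioo (x n - δ) (x n + δ) := by
    intro δ
    rw [Metric.thickening_eq_biUnion_ball, Set.biUnion_range]
    simp only [Real.ball_eq_Ioo]
  set A : ℝ := 2*((N0:ℝ)+1) with hAdef
  have hA : 0 < A := by positivity
  set δ0 : ℝ := min 1 (c1 / (2 * A ^ ((1-κ)⁻¹))) with hδ0def
  have hδ0pos : 0 < δ0 := lt_min one_pos (by positivity)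
  refine ⟨(c1/2) ^ (1-κ), 2*(N0:ℝ) + 6 + c2, δ0, by positivity, by positivity, hδ0pos,
    min_le_left _ _, ?_⟩
  intro δ hδ hδlt
  have hδ1 : δ < 1 := lt_of_lt_of_le hδlt (min_le_left _ _)
  have hδκ : 0 < δ ^ κ := Real.rpow_pos_of_pos hδ _
  -- ================= UPPER BOUND =================
  set N : ℕ := N0 + ⌈δ ^ (-(1 - κ))⌉₊ with hNdef
  have hNge : δ ^ (-(1-κ)) ≤ (N:ℝ) := by
    have := Nat.le_ceil (δ ^ (-(1-κ)))
    have h2 : (⌈δ ^ (-(1-κ))⌉₊ : ℝ) ≤ (N:ℝ) := by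
      rw [hNdef]; push_cast; linarith [Nat.cast_nonneg (α := ℝ) N0]
    linarith
  have hNle : (N:ℝ) ≤ (N0:ℝ) + δ ^ (-(1-κ)) + 1 := by
    rw [hNdef]; push_cast
    linarith [Nat.ceil_lt_add_one (Real.rpow_nonneg hδ.le (-(1-κ)))]
  have hNpos : 0 < (N:ℝ) := by
    have : (1:ℝ) ≤ (N0:ℝ) := by exact_mod_cast hN01
    have : δ ^ (-(1-κ)) ≤ (N:ℝ) := hNge
    have h3 : 0 < δ ^ (-(1-κ)) := Real.rpow_pos_of_pos hδ _
    linarith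
  have hNN0 : N0 ≤ N := by rw [hNdef]; omega
  -- the subset covering
  have hcover : Metric.thickening δ (Set.range x) ⊆
      (⋃ n ∈ Finset.range N, Ioo (x n - δ) (x n + δ)) ∪ Ioo (-δ) (x N + δ) := by
    rw [hthick]
    rintro y hy
    obtain ⟨n, hn⟩ := Set.mem_iUnion.mp hy
    by_cases h : n < N
    · exact Or.inl (Set.mem_biUnion (Finset.mem_range.mpr h) hn)
    · refine Or.inr (Set.mem_of_mem_of_subset hn (Set.Ioo_subset_Ioo ?_ ?_))
      · linarith [(hx0 n).1]
      · have : x n ≤ x N := (hanti.antitone (by omega))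
        linarith
  have hvol_up : volume (Metric.thickening δ (Set.range x)) ≤
      ENNReal.ofReal (2*δ*N + (x N + 2*δ)) := by
    refine le_trans (measure_mono hcover) (le_trans (measure_union_le _ _) ?_)
    have h1 : volume (⋃ n ∈ Finset.range N, Ioo (x n - δ) (x n + δ))
        ≤ N * ENNReal.ofReal (2*δ) := by
      refine le_trans (measure_biUnion_finset_le _ _) ?_
      have : ∀ n, volume (Ioo (x n - δ) (x n + δ)) = ENNReal.ofReal (2*δ) := by
        intro n; rw [Real.volume_Ioo]; ring_nf
      simp only [this, Finset.sum_const, Finset.card_range, nsmul_eq_mul]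
      exact le_rfl
    have h2 : volume (Ioo (-δ) (x N + δ)) = ENNReal.ofReal (x N + 2*δ) := by
      rw [Real.volume_Ioo]; ring_nf
    calc volume (⋃ n ∈ Finset.range N, Ioo (x n - δ) (x n + δ)) + volume (Ioo (-δ) (x N + δ))
        ≤ N * ENNReal.ofReal (2*δ) + ENNReal.ofReal (x N + 2*δ) := by
          exact add_le_add h1 (le_of_eq h2)
      _ = ENNReal.ofReal (2*δ*N + (x N + 2*δ)) := by
          rw [← ENNReal.ofReal_natCast N, ← ENNReal.ofReal_mul (Nat.cast_nonneg N),
            ← ENNReal.ofReal_add (by positivity) (add_nonneg (hxpos N).le (by positivity))]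
          congr 1; ring
  have hvolne : volume (Metric.thickening δ (Set.range x)) ≠ ⊤ :=
    ne_top_of_le_ne_top ENNReal.ofReal_ne_top hvol_up
  have hδδ : δ * δ ^ (-(1-κ)) = δ ^ κ := by
    nth_rewrite 1 [← Real.rpow_one δ]
    rw [← Real.rpow_add hδ]
    congr 1; ring
  have hδle : δ ≤ δ ^ κ := by
    nth_rewrite 1 [← Real.rpow_one δ]
    exact Real.rpow_le_rpow_of_exponent_ge hδ hδ1.le hκlt.le
  have hexp1 : (-(1-κ))*(-e) = κ := by
    rw [hκdef, hedef]
    have h1 : (k:ℝ) ≠ 0 := by linarith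
    have h2 : (k:ℝ) - 1 ≠ 0 := by linarith
    field_simp
  have hxNle : x N ≤ c2 * δ ^ κ := by
    have h1 := (hbd N hNN0).2.1
    have h2 : (N:ℝ) ^ (-e) ≤ (δ ^ (-(1-κ))) ^ (-e) :=
      Real.rpow_le_rpow_of_nonpos (Real.rpow_pos_of_pos hδ _) hNge (by linarith)
    have h3 : (δ ^ (-(1-κ))) ^ (-e) = δ ^ κ := by
      rw [← Real.rpow_mul hδ.le, hexp1]
    nlinarith [Real.rpow_nonneg hδ.le κ]
  have hreal_up : 2*δ*N + (x N + 2*δ) ≤ (2*(N0:ℝ) + 6 + c2) * δ ^ κ := by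
    have h1 : 2*δ*(N:ℝ) ≤ (2*(N0:ℝ)+2)*δ + 2*δ^κ := by
      have h0 := mul_le_mul_of_nonneg_left hNle (by linarith : (0:ℝ) ≤ 2*δ)
      have h5 : 2*δ*((N0:ℝ) + δ^(-(1-κ)) + 1) = (2*(N0:ℝ)+2)*δ + 2*(δ*δ^(-(1-κ))) := by ring
      rw [h5, hδδ] at h0
      linarith
    have h2 : (2*(N0:ℝ)+2)*δ ≤ (2*(N0:ℝ)+2)*δ^κ := by
      have h0 : (0:ℝ) ≤ 2*(N0:ℝ)+2 := by positivity
      exact mul_le_mul_of_nonneg_left hδle h0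
    have h3 : (2*(N0:ℝ)+2)*δ^κ + 2*δ^κ + c2*δ^κ + 2*δ^κ = (2*(N0:ℝ)+6+c2)*δ^κ := by ring
    linarith
  have hupper : (volume (Metric.thickening δ (Set.range x))).toReal
      ≤ (2*(N0:ℝ) + 6 + c2) * δ ^ κ := by
    refine ENNReal.toReal_le_of_le_ofReal (by positivity) ?_
    exact le_trans hvol_up (ENNReal.ofReal_le_ofReal hreal_up)
  -- ================= LOWER BOUND =================
  set B : ℝ := (c1/(2*δ)) ^ (1-κ) with hBdef
  have hBpos : 0 < B := Real.rpow_pos_of_pos (by positivity) _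
  have hAB : A < B := by
    have hδlt2 : δ < c1 / (2 * A ^ ((1-κ)⁻¹)) := lt_of_lt_of_le hδlt (min_le_right _ _)
    have hApow : 0 < A ^ ((1-κ)⁻¹) := Real.rpow_pos_of_pos hA _
    have h1 : A ^ ((1-κ)⁻¹) < c1/(2*δ) := by
      rw [lt_div_iff₀ (by positivity)] at hδlt2
      rw [lt_div_iff₀ (by positivity)]
      nlinarith
    calc A = (A ^ ((1-κ)⁻¹)) ^ (1-κ) := (Real.rpow_inv_rpow hA.le (by linarith)).symm
      _ < B := Real.rpow_lt_rpow hApow.le h1 h1κ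
  set M : ℕ := ⌊B⌋₊ with hMdef
  have hMB : (M:ℝ) ≤ B := Nat.floor_le hBpos.le
  have hMB' : B - 1 ≤ (M:ℝ) := by
    have := Nat.lt_floor_add_one B
    linarith
  have hA2 : (N0:ℝ) + 1 = A/2 := by rw [hAdef]; ring
  have hMN0 : N0 + 1 ≤ M := by
    have : (N0:ℝ) + 1 ≤ (M:ℝ) := by
      rw [hA2]; linarith
    exact_mod_cast this
  have hMsub : B/2 ≤ (M:ℝ) - (N0:ℝ) := by
    have : (N0:ℝ) + 1 ≤ B/2 := by rw [hA2]; linarith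
    linarith
  have hq : (k:ℝ)/((k:ℝ)-1) = (1-κ)⁻¹ := by
    have h1 : 1 - κ = ((k:ℝ)-1)/(k:ℝ) := by
      rw [hκdef]; field_simp
    rw [h1, inv_div]
  have hgap : ∀ n, N0 ≤ n → n < M → 2*δ ≤ x n - x (n+1) := by
    intro n hn hnM
    have h1 := (hbd n hn).2.2.1
    have hnpos : (0:ℝ) < n := by
      have : (1:ℝ) ≤ (n:ℝ) := by exact_mod_cast le_trans hN01 hn
      linarith
    have hnB : (n:ℝ) ≤ B := le_trans (by exact_mod_cast hnM.le) hMB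
    have h2 : (n:ℝ) ^ ((k:ℝ)/((k:ℝ)-1)) ≤ c1/(2*δ) := by
      rw [hq]
      calc (n:ℝ) ^ ((1-κ)⁻¹) ≤ B ^ ((1-κ)⁻¹) :=
            Real.rpow_le_rpow hnpos.le hnB (by positivity)
        _ = c1/(2*δ) := Real.rpow_rpow_inv (by positivity) (by linarith)
    have h3 : (0:ℝ) < (n:ℝ) ^ ((k:ℝ)/((k:ℝ)-1)) := Real.rpow_pos_of_pos hnpos _
    have h4 : 2*δ ≤ c1 * (n:ℝ) ^ (-((k:ℝ)/((k:ℝ)-1))) := by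
      rw [Real.rpow_neg hnpos.le, ← div_eq_mul_inv, le_div_iff₀ h3]
      rw [le_div_iff₀ (by positivity)] at h2
      nlinarith
    linarith
  have hdisj : (↑(Finset.Ico N0 M) : Set ℕ).PairwiseDisjoint
      (fun n => Ioo (x n - δ) (x n + δ)) := by
    intro m hm n hn hmn
    simp only [Finset.coe_Ico, Set.mem_Ico] at hm hn
    have key : ∀ a b : ℕ, N0 ≤ a → a < M → a < b → Disjoint (Ioo (x a - δ) (x a + δ)) (Ioo (x b - δ) (x b + δ)) := by
      intro a b ha haM hab
      have h1 : x b ≤ x (a+1) := hanti.antitone (by omega)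
      have h2 := hgap a ha haM
      rw [Set.disjoint_left]
      intro y hy hy2
      simp only [Set.mem_Ioo] at hy hy2
      have : x b + δ ≤ x a - δ := by linarith
      linarith [hy.1, hy2.2]
    rcases lt_or_gt_of_ne hmn with h | h
    · exact key m n hm.1 hm.2 h
    · exact (key n m hn.1 hn.2 h).symm
  have hvol_lo : ENNReal.ofReal (((M:ℝ) - (N0:ℝ)) * (2*δ))
      ≤ volume (Metric.thickening δ (Set.range x)) := by
    rw [hthick]
    have hsub : (⋃ n ∈ Finset.Ico N0 M, Ioo (x n - δ) (x n + δ)) ⊆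
        ⋃ n, Ioo (x n - δ) (x n + δ) := by
      simp only [Set.iUnion_subset_iff]
      intro n _
      exact Set.subset_iUnion (fun m => Ioo (x m - δ) (x m + δ)) n
    refine le_trans ?_ (measure_mono hsub)
    rw [measure_biUnion_finset hdisj (fun n _ => measurableSet_Ioo)]
    have heach : ∀ n, volume (Ioo (x n - δ) (x n + δ)) = ENNReal.ofReal (2*δ) := by
      intro n; rw [Real.volume_Ioo]; ring_nf
    simp only [heach, Finset.sum_const, Nat.card_Ico, nsmul_eq_mul]
    rw [← ENNReal.ofReal_natCast (M - N0), ← ENNReal.ofReal_mul (Nat.cast_nonneg _)]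
    refine ENNReal.ofReal_le_ofReal ?_
    have : ((M - N0 : ℕ):ℝ) = (M:ℝ) - (N0:ℝ) := by
      have : N0 ≤ M := by omega
      push_cast [this]; ring
    rw [this]
  have hBsplit : B = (c1/2) ^ (1-κ) * δ ^ (-(1-κ)) := by
    rw [hBdef]
    have : c1/(2*δ) = (c1/2) * δ⁻¹ := by field_simp
    rw [this, Real.mul_rpow (by positivity) (by positivity),
      Real.inv_rpow hδ.le, ← Real.rpow_neg hδ.le]
  have hreal_lo : (c1/2) ^ (1-κ) * δ ^ κ ≤ ((M:ℝ) - (N0:ℝ)) * (2*δ) := by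
    have h1 : B * δ = (c1/2) ^ (1-κ) * δ ^ κ := by
      rw [hBsplit, mul_assoc, mul_comm (δ ^ (-(1-κ))) δ, hδδ]
    have h2 := mul_le_mul_of_nonneg_right hMsub (by linarith : (0:ℝ) ≤ 2*δ)
    have h3 : B/2*(2*δ) = B*δ := by ring
    linarith
  have hlower : (c1/2) ^ (1-κ) * δ ^ κ ≤ (volume (Metric.thickening δ (Set.range x))).toReal := by
    refine le_trans hreal_lo ?_
    rw [← ENNReal.ofReal_le_iff_le_toReal hvolne] at *
    exact hvol_lo
  exact ⟨hlower, hupper⟩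

/-- For a map tangent to the identity, `P(x) = x - βx^k + o(x^k)` with `β > 0`,
integer `k ≥ 2`, an orbit `x_{n+1} = P(x_n)` decreasing to `0` has Minkowski
dimension `1 - 1/k`. -/
theorem orbit_of_tangent_to_identity_map_dim (ε β : ℝ) (k : ℕ)
    (hε : 0 < ε) (hβ : 0 < β) (hk : 2 ≤ k)
    (P : ℝ → ℝ) (hmaps : ∀ x ∈ Ioo (0 : ℝ) ε, P x ∈ Ioo (0 : ℝ) ε)
    (hP : Tendsto (fun x : ℝ => (P x - (x - β * x ^ k)) / x ^ k)
      (nhdsWithin 0 (Ioi 0)) (nhds 0))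
    (x : ℕ → ℝ) (hx0 : ∀ n, x n ∈ Ioo (0 : ℝ) ε)
    (horb : ∀ n, x (n + 1) = P (x n))
    (hanti : StrictAnti x) (hlim : Tendsto x atTop (nhds 0)) :
    Tendsto
      (fun δ : ℝ => 1 - Real.log ((volume (Metric.thickening δ (Set.range x))).toReal) / Real.log δ)
      (nhdsWithin 0 (Ioi 0)) (nhds (1 - 1 / (k : ℝ))) := by
  obtain ⟨c1, c2, hc1, hc2, N0, hN01, hbd⟩ := orbit_bounds ε β k hβ hk P hP x hx0 horb hlim
  obtain ⟨D1, D2, δ0, hD1, hD2, hδ0, hδ01, hV⟩ :=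
    volume_bounds ε k hk hε x hx0 hanti c1 c2 hc1 hc2 N0 hN01 hbd
  set κ : ℝ := (k:ℝ)⁻¹ with hκdef
  set V : ℝ → ℝ := fun δ => (volume (Metric.thickening δ (Set.range x))).toReal with hVdef
  set C : ℝ := |Real.log D1| + |Real.log D2| with hCdef
  have hCnonneg : 0 ≤ C := by positivity
  have hkey : ∀ᶠ δ in nhdsWithin (0:ℝ) (Ioi 0),
      ‖Real.log (V δ) / Real.log δ - κ‖ ≤ C / (-Real.log δ) := by
    filter_upwards [Ioo_mem_nhdsGT_of_mem (⟨le_refl 0, hδ0⟩ : (0:ℝ) ∈ Ico 0 δ0)] with δ hδmem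
    obtain ⟨hδ, hδlt⟩ := hδmem
    have hδ1 : δ < 1 := lt_of_lt_of_le hδlt hδ01
    have hlogδ : Real.log δ < 0 := Real.log_neg hδ hδ1
    have hδκ : 0 < δ ^ κ := Real.rpow_pos_of_pos hδ _
    obtain ⟨hVlo, hVhi⟩ := hV δ hδ hδlt
    have hVpos : 0 < V δ := lt_of_lt_of_le (mul_pos hD1 hδκ) hVlo
    have hlog_lo : Real.log D1 + κ * Real.log δ ≤ Real.log (V δ) := by
      have := Real.log_le_log (by positivity) hVlo
      rwa [Real.log_mul hD1.ne' hδκ.ne', Real.log_rpow hδ] at this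
    have hlog_hi : Real.log (V δ) ≤ Real.log D2 + κ * Real.log δ := by
      have := Real.log_le_log hVpos hVhi
      rwa [Real.log_mul hD2.ne' hδκ.ne', Real.log_rpow hδ] at this
    have habs : |Real.log (V δ) - κ * Real.log δ| ≤ C := by
      rw [abs_le]
      constructor
      · have := neg_abs_le (Real.log D1)
        have := abs_nonneg (Real.log D2)
        rw [hCdef]; linarith
      · have := le_abs_self (Real.log D2)
        have := abs_nonneg (Real.log D1)
        rw [hCdef]; linarith
    have h4 : Real.log (V δ) / Real.log δ - κ
        = (Real.log (V δ) - κ * Real.log δ) / Real.log δ := by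
      rw [sub_div, mul_div_assoc, div_self hlogδ.ne, mul_one]
    rw [Real.norm_eq_abs, h4, abs_div, abs_of_neg hlogδ]
    have hpos : (0:ℝ) < -Real.log δ := by linarith
    gcongr
  have hden : Tendsto (fun δ : ℝ => C / (-Real.log δ)) (nhdsWithin 0 (Ioi 0)) (nhds 0) := by
    have h1 : Tendsto (fun δ : ℝ => -Real.log δ) (nhdsWithin 0 (Ioi 0)) atTop :=
      tendsto_neg_atTop_iff.mpr Real.tendsto_log_nhdsGT_zero
    have h2 := h1.inv_tendsto_atTop
    have := h2.const_mul C
    simpa [div_eq_mul_inv, Function.comp] using this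
  have hsub : Tendsto (fun δ : ℝ => Real.log (V δ) / Real.log δ - κ)
      (nhdsWithin 0 (Ioi 0)) (nhds 0) := squeeze_zero_norm' hkey hden
  have hκlim : Tendsto (fun δ : ℝ => Real.log (V δ) / Real.log δ)
      (nhdsWithin 0 (Ioi 0)) (nhds κ) := by
    have h := hsub.add (tendsto_const_nhds : Tendsto (fun _ : ℝ => κ) (nhdsWithin 0 (Ioi 0)) (nhds κ))
    simpa using h
  have h5 : (1:ℝ) - 1/(k:ℝ) = 1 - κ := by rw [hκdef, one_div]
  rw [h5]
  exact tendsto_const_nhds.sub hκlim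
end
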